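/- arXiv:2602.09728 — 5 statements merged into one kernel-verified Lean document; each statement's English description precedes it below -/
import Mathlib

section
/- Proposition 2 (More backloaded than efficient). Let (v^{B,T}_t)_{t=1}^T be the unique maximizer of Problem B(T) and (v^{E,T}_t)_{t=1}^T the unique maximizer of Problem E(T). Then: (i) v^{B,T}_1 ≥ v^{E,T}_1; (ii) if for some t one has v^{E,T}_t ≥ v^{B,T}_t and v^{E,T}_t > 0, then v^{E,T}_s ≥ v^{B,T}_s for all s > t, and when t ≤ T−2 this inequality is strict for every s > t with v^{E,T}_s > 0; (iii) if v^{B,T}_t > v^{E,T}_t for some t, then there exists t' > t with v^{B,T}_{t'} < v^{E,T}_{t'}, and then v^{E,T}_s ≥ v^{B,T}_s for all s ≥ t'. -/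
/-!
Both plans maximize a linear objective `∑ w t * v t` over the same convex budget set
`∑ φ (v t) / c t ≤ I`, and the weights of Problem E are those of Problem B multiplied by
`g t = (β / δ₁) ^ (min t (T - 1) - 1)`, which is nondecreasing in `t` and strictly increasing
up to `T - 1`. Shifting budget between two periods `p ≠ q` of an optimal plan with `v p > 0`
gives the first-order condition `w q * φ' (v p) / c p ≤ w p * φ' (v q) / c q` (a secant slope of
`φ` replaces `φ' (v q)` when `v q = 0`). If the E-plan is weakly above the B-plan at `p` and
weakly below it at `q`, convexity lets the two conditions be chained into `g q ≤ g p`, strictly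
if the E-plan is strictly below at `q`; this contradicts backloading. Parts (i) and (iii) follow
because a feasible plan that dominates an optimal one coordinatewise coincides with it.
-/

open Filter Topology Finset

structure IsBudgetMaximizer {ι : Type*} (s : Finset ι) (φ : ℝ → ℝ) (c : ι → ℝ) (I : ℝ)
    (w v : ι → ℝ) : Prop where
  nonneg : ∀ t ∈ s, 0 ≤ v t
  budget_le : ∑ t ∈ s, φ (v t) / c t ≤ I
  le_of_feasible : ∀ u : ι → ℝ, (∀ t ∈ s, 0 ≤ u t) → ∑ t ∈ s, φ (u t) / c t ≤ I →
    ∑ t ∈ s, w t * u t ≤ ∑ t ∈ s, w t * v t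

namespace IsBudgetMaximizer

variable {ι : Type*} {s : Finset ι} {φ : ℝ → ℝ} {c w v : ι → ℝ} {I : ℝ}

theorem eq_of_forall_le (h : IsBudgetMaximizer s φ c I w v) (hw : ∀ t ∈ s, 0 < w t)
    {u : ι → ℝ} (hu : ∀ t ∈ s, 0 ≤ u t) (hub : ∑ t ∈ s, φ (u t) / c t ≤ I)
    (hle : ∀ t ∈ s, v t ≤ u t) : ∀ t ∈ s, u t = v t := by
  by_contra! ⟨t, ht, hne⟩
  have hlt : ∑ t ∈ s, w t * v t < ∑ t ∈ s, w t * u t :=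
    sum_lt_sum (fun r hr => mul_le_mul_of_nonneg_left (hle r hr) (hw r hr).le)
      ⟨t, ht, mul_lt_mul_of_pos_left ((hle t ht).lt_of_ne hne.symm) (hw t ht)⟩
  exact (h.le_of_feasible u hu hub).not_gt hlt

theorem pair_le [DecidableEq ι] (h : IsBudgetMaximizer s φ c I w v) {p q : ι} (hp : p ∈ s)
    (hq : q ∈ s) (hpq : p ≠ q) :
    ∀ x y, 0 ≤ x → 0 ≤ y → φ x / c p + φ y / c q ≤ φ (v p) / c p + φ (v q) / c q →
      w p * x + w q * y ≤ w p * v p + w q * v q := by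
  intro x y hx hy hxy
  set u := Function.update (Function.update v p x) q y
  have hup : u p = x := by simp [u, Function.update_of_ne hpq]
  have huq : u q = y := by simp [u]
  have hu : ∀ t ∈ s, t ≠ p ∧ t ≠ q → u t = v t := fun t _ ht => by
    simp [u, Function.update_of_ne ht.1, Function.update_of_ne ht.2]
  have change : ∀ F : ι → ℝ → ℝ, ∑ t ∈ s, F t (u t) =
      ∑ t ∈ s, F t (v t) + (F p x - F p (v p)) + (F q y - F q (v q)) := by
    intro F
    rw [add_assoc, ← hup, ← huq, ← sum_eq_add_of_mem p q hp hq hpq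
      (f := fun t => F t (u t) - F t (v t)) fun t ht hne => by simp [hu t ht hne],
      ← sum_add_distrib]
    simp
  have hu0 : ∀ t ∈ s, 0 ≤ u t := by
    intro t ht
    by_cases htp : t = p
    · rw [htp, hup]; exact hx
    by_cases htq : t = q
    · rw [htq, huq]; exact hy
    rw [hu t ht ⟨htp, htq⟩]; exact h.nonneg t ht
  have := h.le_of_feasible u hu0 (by rw [change fun t z => φ z / c t]; linarith [h.budget_le])
  rw [change fun t z => w t * z] at this
  linarith

end IsBudgetMaximizer

section Marginal

variable {φ : ℝ → ℝ} {cx cy wx wy x y A : ℝ}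

theorem exists_mul_lt_of_mul_lt {a b c d : ℝ} (ha : 0 < a) (h : d * b < a * c) :
    ∃ θ, d < a * θ ∧ b * θ < c := by
  rcases le_or_gt b 0 with hb | hb
  · refine ⟨d / a + 1, by rw [mul_add, mul_div_cancel₀ _ ha.ne']; linarith, ?_⟩
    have : b * (d / a) < c := by rw [mul_div_assoc', div_lt_iff₀ ha]; linarith
    nlinarith
  · obtain ⟨θ, h1, h2⟩ := exists_between (show d / a < c / b by
      rw [div_lt_div_iff₀ ha hb]; linarith)
    exact ⟨θ, by rwa [div_lt_iff₀' ha] at h1, by rwa [lt_div_iff₀' hb] at h2⟩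

theorem mul_deriv_le_mul_slope (hφ : ConvexOn ℝ (Set.Ici 0) φ) (hcy : 0 < cy)
    (hwx : 0 < wx) (hwy : 0 < wy) (hx : 0 < x) (hy : 0 ≤ y) {z : ℝ} (hyz : y < z)
    (hA : HasDerivAt φ A x)
    (hopt : ∀ x' y', 0 ≤ x' → 0 ≤ y' → φ x' / cx + φ y' / cy ≤ φ x / cx + φ y / cy →
      wx * x' + wy * y' ≤ wx * x + wy * y) :
    wy * (A / cx) ≤ wx * (slope φ y z / cy) := by
  -- Otherwise `x' = x - h`, `y' = y + θ * h` costs less and earns more for small `h > 0`.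
  by_contra! hlt
  set b := slope φ y z / cy
  obtain ⟨θ, hθw, hθb⟩ := exists_mul_lt_of_mul_lt hwy hlt
  have hθ : 0 < θ := pos_of_mul_pos_right (hwx.trans hθw) hwy.le
  have hslope : Tendsto (fun x' => slope φ x x' / cx) (𝓝[<] x) (𝓝 (A / cx)) :=
    ((hasDerivAt_iff_tendsto_slope_left_right.mp hA).1).div_const cx
  have hnear : ∀ᶠ x' in 𝓝[<] x, 0 < x' ∧ y + θ * (x - x') < z :=
    nhdsWithin_le_nhds <| (eventually_gt_nhds hx).and <|
      (by fun_prop : ContinuousAt (fun x' => y + θ * (x - x')) x).eventually_lt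
        continuousAt_const (by simpa using hyz)
  obtain ⟨x', ⟨⟨hx'0, hx'z⟩, hx'A⟩, hx'x⟩ :=
    ((hnear.and ((hslope.eventually (lt_mem_nhds hθb)))).and self_mem_nhdsWithin).exists
  set y' := y + θ * (x - x')
  have hxx' : 0 < x - x' := sub_pos.2 hx'x
  have hyy' : y < y' := lt_add_of_pos_right _ (mul_pos hθ hxx')
  have hφx : (φ x' - φ x) / cx ≤ (x' - x) * (b * θ) := by
    have hs : slope φ x x' * (x' - x) = φ x' - φ x := by
      rw [slope_def_field, div_mul_cancel₀ _ (sub_ne_zero.2 hx'x.ne)]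
    rw [← hs, mul_comm, mul_div_assoc]
    exact mul_le_mul_of_nonpos_left hx'A.le (by linarith)
  have hφy : (φ y' - φ y) / cy ≤ θ * (x - x') * b := by
    have hs := hφ.slope_mono hy ⟨(hy.trans hyy'.le : 0 ≤ y'), hyy'.ne'⟩
      ⟨(hy.trans hyz.le : 0 ≤ z), hyz.ne'⟩ hx'z.le
    rw [slope_def_field, div_le_iff₀ (sub_pos.2 hyy')] at hs
    calc (φ y' - φ y) / cy ≤ slope φ y z * (y' - y) / cy := by gcongr
      _ = θ * (x - x') * b := by simp only [b, y']; ring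
  have hgain := hopt x' y' hx'0.le (hy.trans hyy'.le) (by rw [sub_div] at hφx hφy; linarith)
  have := mul_lt_mul_of_pos_right hθw hxx'
  simp only [y'] at hgain
  linarith

theorem mul_deriv_le_mul_deriv (hφ : ConvexOn ℝ (Set.Ici 0) φ) (hcy : 0 < cy)
    (hwx : 0 < wx) (hwy : 0 < wy) (hx : 0 < x) (hy : 0 ≤ y) {u D : ℝ} (hyu : y ≤ u)
    (hA : HasDerivAt φ A x) (hD : HasDerivAt φ D u)
    (hopt : ∀ x' y', 0 ≤ x' → 0 ≤ y' → φ x' / cx + φ y' / cy ≤ φ x / cx + φ y / cy →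
      wx * x' + wy * y' ≤ wx * x + wy * y) :
    wy * (A / cx) ≤ wx * (D / cy) := by
  rcases hyu.lt_or_eq with hyu | rfl
  · calc wy * (A / cx) ≤ wx * (slope φ y u / cy) :=
          mul_deriv_le_mul_slope hφ hcy hwx hwy hx hy hyu hA hopt
      _ ≤ wx * (D / cy) := by
          gcongr
          exact hφ.slope_le_of_hasDerivAt hy (hy.trans hyu.le) hyu hD
  · refine ge_of_tendsto
      ((((hasDerivAt_iff_tendsto_slope_left_right.mp hD).2).div_const cy).const_mul wx) ?_
    filter_upwards [self_mem_nhdsWithin] with z hz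
    exact mul_deriv_le_mul_slope hφ hcy hwx hwy hx hy hz hA hopt

theorem mul_deriv_lt_mul_deriv (hφ : StrictConvexOn ℝ (Set.Ici 0) φ) (hcy : 0 < cy)
    (hwx : 0 < wx) (hwy : 0 < wy) (hx : 0 < x) (hy : 0 ≤ y) {u D : ℝ} (hyu : y < u)
    (hA : HasDerivAt φ A x) (hD : HasDerivAt φ D u)
    (hopt : ∀ x' y', 0 ≤ x' → 0 ≤ y' → φ x' / cx + φ y' / cy ≤ φ x / cx + φ y / cy →
      wx * x' + wy * y' ≤ wx * x + wy * y) :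
    wy * (A / cx) < wx * (D / cy) :=
  calc wy * (A / cx) ≤ wx * (slope φ y u / cy) :=
        mul_deriv_le_mul_slope hφ.convexOn hcy hwx hwy hx hy hyu hA hopt
    _ < wx * (D / cy) := by
        gcongr
        exact hφ.slope_lt_of_hasDerivAt hy (hy.trans hyu.le) hyu hD

theorem HasDerivAt.pos_of_strictMonoOn_of_convexOn (hm : StrictMonoOn φ (Set.Ici 0))
    (hφ : ConvexOn ℝ (Set.Ici 0) φ) (hx : 0 < x) (hA : HasDerivAt φ A x) : 0 < A := by
  have hs : 0 < slope φ 0 x := by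
    rw [slope_def_field]
    exact div_pos (sub_pos.2 (hm Set.self_mem_Ici hx.le hx)) (by linarith)
  exact hs.trans_le (hφ.slope_le_of_hasDerivAt Set.self_mem_Ici hx.le hx hA)

end Marginal

section Crossing

variable {ι : Type*} [DecidableEq ι] {s : Finset ι} {φ : ℝ → ℝ} {c w g vE vB : ι → ℝ} {I : ℝ}

theorem weight_le_of_crossing (hm : StrictMonoOn φ (Set.Ici 0))
    (hφ : StrictConvexOn ℝ (Set.Ici 0) φ) (hd : DifferentiableOn ℝ φ (Set.Ioi 0))
    (hc : ∀ t ∈ s, 0 < c t) (hw : ∀ t ∈ s, 0 < w t) (hg : ∀ t ∈ s, 0 < g t)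
    (hE : IsBudgetMaximizer s φ c I (fun t => w t * g t) vE)
    (hB : IsBudgetMaximizer s φ c I w vB) {p q : ι} (hp : p ∈ s) (hq : q ∈ s) (hpq : p ≠ q)
    (hpE : vB p ≤ vE p) (hEp : 0 < vE p) (hqB : vE q ≤ vB q) (hBq : 0 < vB q) :
    g q ≤ g p ∧ (vE q < vB q → g q < g p) := by
  have hderiv : ∀ {x}, 0 < x → HasDerivAt φ (deriv φ x) x := fun hx =>
    ((hd _ hx).differentiableAt (Ioi_mem_nhds hx)).hasDerivAt
  set A := deriv φ (vE p)
  set D := deriv φ (vB q)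
  have hA0 : 0 < w q * (A / c p) := mul_pos (hw q hq)
    (div_pos ((hderiv hEp).pos_of_strictMonoOn_of_convexOn hm hφ.convexOn hEp) (hc p hp))
  have hwEp : 0 < w p * g p := mul_pos (hw p hp) (hg p hp)
  have hwEq : 0 < w q * g q := mul_pos (hw q hq) (hg q hq)
  have hB' : w p * (D / c q) ≤ w q * (A / c p) :=
    mul_deriv_le_mul_deriv hφ.convexOn (hc p hp) (hw q hq) (hw p hp) hBq (hB.nonneg p hp) hpE
      (hderiv hBq) (hderiv hEp) (hB.pair_le hq hp hpq.symm)
  have hbound : w p * g p * (D / c q) ≤ g p * (w q * (A / c p)) := by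
    rw [mul_comm (w p), mul_assoc]
    exact mul_le_mul_of_nonneg_left hB' (hg p hp).le
  have hoptE := hE.pair_le hp hq hpq
  have hcq := hc q hq
  have hEq : 0 ≤ vE q := hE.nonneg q hq
  refine ⟨le_of_mul_le_mul_right ?_ hA0, fun hlt => lt_of_mul_lt_mul_right ?_ hA0.le⟩
  · calc g q * (w q * (A / c p)) = w q * g q * (A / c p) := by ring
      _ ≤ w p * g p * (D / c q) := mul_deriv_le_mul_deriv hφ.convexOn hcq hwEp hwEq hEp hEq hqB
          (hderiv hEp) (hderiv hBq) hoptE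
      _ ≤ g p * (w q * (A / c p)) := hbound
  · calc g q * (w q * (A / c p)) = w q * g q * (A / c p) := by ring
      _ < w p * g p * (D / c q) := mul_deriv_lt_mul_deriv hφ hcq hwEp hwEq hEp hEq hlt
          (hderiv hEp) (hderiv hBq) hoptE
      _ ≤ g p * (w q * (A / c p)) := hbound

theorem le_of_le_of_weight_le (hm : StrictMonoOn φ (Set.Ici 0))
    (hφ : StrictConvexOn ℝ (Set.Ici 0) φ) (hd : DifferentiableOn ℝ φ (Set.Ioi 0))
    (hc : ∀ t ∈ s, 0 < c t) (hw : ∀ t ∈ s, 0 < w t) (hg : ∀ t ∈ s, 0 < g t)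
    (hE : IsBudgetMaximizer s φ c I (fun t => w t * g t) vE)
    (hB : IsBudgetMaximizer s φ c I w vB) {p q : ι} (hp : p ∈ s) (hq : q ∈ s) (hpq : p ≠ q)
    (hpE : vB p ≤ vE p) (hEp : 0 < vE p) (hgpq : g p ≤ g q) : vB q ≤ vE q := by
  by_contra! hlt
  have hBq : 0 < vB q := (hE.nonneg q hq).trans_lt hlt
  exact hgpq.not_gt
    ((weight_le_of_crossing hm hφ hd hc hw hg hE hB hp hq hpq hpE hEp hlt.le hBq).2 hlt)

theorem lt_of_le_of_weight_lt (hm : StrictMonoOn φ (Set.Ici 0))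
    (hφ : StrictConvexOn ℝ (Set.Ici 0) φ) (hd : DifferentiableOn ℝ φ (Set.Ioi 0))
    (hc : ∀ t ∈ s, 0 < c t) (hw : ∀ t ∈ s, 0 < w t) (hg : ∀ t ∈ s, 0 < g t)
    (hE : IsBudgetMaximizer s φ c I (fun t => w t * g t) vE)
    (hB : IsBudgetMaximizer s φ c I w vB) {p q : ι} (hp : p ∈ s) (hq : q ∈ s) (hpq : p ≠ q)
    (hpE : vB p ≤ vE p) (hEp : 0 < vE p) (hgpq : g p < g q) (hEq : 0 < vE q) : vB q < vE q := by
  by_contra! hle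
  exact hgpq.not_ge
    (weight_le_of_crossing hm hφ hd hc hw hg hE hB hp hq hpq hpE hEp hle (hEq.trans_le hle)).1

theorem le_of_weight_min (hm : StrictMonoOn φ (Set.Ici 0))
    (hφ : StrictConvexOn ℝ (Set.Ici 0) φ) (hd : DifferentiableOn ℝ φ (Set.Ioi 0))
    (hc : ∀ t ∈ s, 0 < c t) (hw : ∀ t ∈ s, 0 < w t) (hg : ∀ t ∈ s, 0 < g t)
    (hE : IsBudgetMaximizer s φ c I (fun t => w t * g t) vE)
    (hB : IsBudgetMaximizer s φ c I w vB) {p : ι} (hp : p ∈ s) (hmin : ∀ q ∈ s, g p ≤ g q) :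
    vE p ≤ vB p := by
  by_contra! hlt
  have hEp : 0 < vE p := (hB.nonneg p hp).trans_lt hlt
  have hle : ∀ q ∈ s, vB q ≤ vE q := fun q hq => by
    rcases eq_or_ne q p with rfl | hqp
    · exact hlt.le
    · exact le_of_le_of_weight_le hm hφ hd hc hw hg hE hB hp hq hqp.symm hlt.le hEp (hmin q hq)
  exact hlt.ne' (hB.eq_of_forall_le hw hE.nonneg hE.budget_le hle p hp)

theorem exists_lt_of_lt [LinearOrder ι] (hm : StrictMonoOn φ (Set.Ici 0))
    (hφ : StrictConvexOn ℝ (Set.Ici 0) φ) (hd : DifferentiableOn ℝ φ (Set.Ioi 0))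
    (hc : ∀ t ∈ s, 0 < c t) (hw : ∀ t ∈ s, 0 < w t) (hg : ∀ t ∈ s, 0 < g t)
    (hgm : MonotoneOn g s) (hE : IsBudgetMaximizer s φ c I (fun t => w t * g t) vE)
    (hB : IsBudgetMaximizer s φ c I w vB) {t : ι} (ht : t ∈ s) (hlt : vE t < vB t) :
    ∃ t' ∈ s, t < t' ∧ vB t' < vE t' := by
  by_contra! hlater
  have hle : ∀ r ∈ s, vE r ≤ vB r := fun r hr => by
    rcases lt_trichotomy r t with hrt | rfl | htr
    · by_contra! hBE
      exact hlt.not_ge (le_of_le_of_weight_le hm hφ hd hc hw hg hE hB hr ht hrt.ne hBE.le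
        ((hB.nonneg r hr).trans_lt hBE) (hgm hr ht hrt.le))
    · exact hlt.le
    · exact hlater r hr htr
  exact hlt.ne' (hE.eq_of_forall_le (fun r hr => mul_pos (hw r hr) (hg r hr)) hB.nonneg
    hB.budget_le hle t ht)

end Crossing

theorem sum_Icc_discount_mul_eq {T : ℕ} (hT : 2 ≤ T) {β δ : ℝ} (hδ : δ ≠ 0) (v : ℕ → ℝ) :
    ∑ t ∈ Icc 1 T, δ ^ (t - 1) * (β / δ) ^ (min t (T - 1) - 1) * v t =
      ∑ t ∈ Icc 1 (T - 1), β ^ (t - 1) * v t + β ^ (T - 2) * δ * v T := by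
  obtain ⟨n, rfl⟩ : ∃ n, T = n + 2 := ⟨T - 2, by omega⟩
  rw [show n + 2 - 1 = n + 1 by omega, sum_Icc_succ_top (by omega)]
  congr 1
  · refine sum_congr rfl fun t ht => ?_
    rw [min_eq_left (mem_Icc.1 ht).2, ← mul_pow, mul_div_cancel₀ _ hδ]
  · rw [min_eq_right (by omega), show n + 2 - 1 = n + 1 by omega, show n + 1 - 1 = n by omega,
      show n + 2 - 2 = n by omega, pow_succ, div_pow]
    field_simp

theorem stmt0_general
    (T : ℕ) (hT : 3 ≤ T)
    (R I : ℝ) (hR : 1 ≤ R)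
    (φ : ℝ → ℝ)
    (hφm : StrictMonoOn φ (Set.Ici 0))
    (hφconv : StrictConvexOn ℝ (Set.Ici 0) φ)
    (hφd : ContDiffOn ℝ 2 φ (Set.Ioi 0))
    (δ1 δ2 q1 q2 β : ℝ) (hδ1 : 0 < δ1) (hδ12 : δ1 < δ2)
    (hq2 : 0 < q2) (hqsum : q1 + q2 = 1)
    (hβ : β = q1 * δ1 + q2 * δ2)
    (vB vE : ℕ → ℝ)
    -- vB solves Problem B(T)
    (hBnonneg : ∀ t ∈ Finset.Icc 1 T, 0 ≤ vB t)
    (hBbudget : ∑ t ∈ Finset.Icc 1 T, φ (vB t) / R ^ (t - 1) ≤ I)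
    (hBmax : ∀ v : ℕ → ℝ, (∀ t ∈ Finset.Icc 1 T, 0 ≤ v t) →
      (∑ t ∈ Finset.Icc 1 T, φ (v t) / R ^ (t - 1) ≤ I) →
      ∑ t ∈ Finset.Icc 1 T, δ1 ^ (t - 1) * v t ≤ ∑ t ∈ Finset.Icc 1 T, δ1 ^ (t - 1) * vB t)
    -- vE solves Problem E(T)
    (hEnonneg : ∀ t ∈ Finset.Icc 1 T, 0 ≤ vE t)
    (hEbudget : ∑ t ∈ Finset.Icc 1 T, φ (vE t) / R ^ (t - 1) ≤ I)
    (hEmax : ∀ v : ℕ → ℝ, (∀ t ∈ Finset.Icc 1 T, 0 ≤ v t) →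
      (∑ t ∈ Finset.Icc 1 T, φ (v t) / R ^ (t - 1) ≤ I) →
      (∑ t ∈ Finset.Icc 1 (T - 1), β ^ (t - 1) * v t) + β ^ (T - 2) * δ1 * v T ≤
        (∑ t ∈ Finset.Icc 1 (T - 1), β ^ (t - 1) * vE t) + β ^ (T - 2) * δ1 * vE T) :
    -- (i)
    (vE 1 ≤ vB 1) ∧
    -- (ii)
    (∀ t ∈ Finset.Icc 1 T, vB t ≤ vE t → 0 < vE t →
      (∀ s ∈ Finset.Icc 1 T, t < s → vB s ≤ vE s) ∧
      (t ≤ T - 2 → ∀ s ∈ Finset.Icc 1 T, t < s → 0 < vE s → vB s < vE s)) ∧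
    -- (iii)
    (∀ t ∈ Finset.Icc 1 T, vE t < vB t →
      ∃ t' ∈ Finset.Icc 1 T, t < t' ∧ vB t' < vE t' ∧
        ∀ s ∈ Finset.Icc 1 T, t' ≤ s → vB s ≤ vE s) := by
  have hρ : 1 < β / δ1 := by
    rw [one_lt_div hδ1, hβ]
    nlinarith [mul_pos hq2 (sub_pos.2 hδ12)]
  set g : ℕ → ℝ := fun t => (β / δ1) ^ (min t (T - 1) - 1)
  have hd := hφd.differentiableOn (by norm_num)
  have hc : ∀ t ∈ Icc 1 T, 0 < R ^ (t - 1) := fun t _ => pow_pos (by linarith) _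
  have hw : ∀ t ∈ Icc 1 T, 0 < δ1 ^ (t - 1) := fun t _ => pow_pos hδ1 _
  have hg : ∀ t ∈ Icc 1 T, 0 < g t := fun t _ => by positivity
  have hgm : MonotoneOn g (Icc 1 T) := fun p _ q _ hpq => pow_le_pow_right₀ hρ.le (by omega)
  have hB : IsBudgetMaximizer (Icc 1 T) φ (fun t => R ^ (t - 1)) I (fun t => δ1 ^ (t - 1)) vB :=
    ⟨hBnonneg, hBbudget, hBmax⟩
  have hE : IsBudgetMaximizer (Icc 1 T) φ (fun t => R ^ (t - 1)) I
      (fun t => δ1 ^ (t - 1) * g t) vE :=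
    ⟨hEnonneg, hEbudget, fun u hu hub => by
      simpa only [g, sum_Icc_discount_mul_eq (T := T) (by omega) hδ1.ne'] using hEmax u hu hub⟩
  have h1 : 1 ∈ Icc 1 T := mem_Icc.2 ⟨le_rfl, by omega⟩
  refine ⟨le_of_weight_min hφm hφconv hd hc hw hg hE hB h1 fun q hq => hgm h1 hq (mem_Icc.1 hq).1,
    fun t ht hBE hE0 => ⟨fun s hs hts => ?_, fun htT s hs hts hEs => ?_⟩, fun t ht hlt => ?_⟩
  · exact le_of_le_of_weight_le hφm hφconv hd hc hw hg hE hB ht hs hts.ne hBE hE0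
      (hgm ht hs hts.le)
  · exact lt_of_le_of_weight_lt hφm hφconv hd hc hw hg hE hB ht hs hts.ne hBE hE0
      (pow_lt_pow_right₀ hρ (by simp only [mem_Icc] at ht hs; omega)) hEs
  · obtain ⟨t', ht', htt', hlt'⟩ := exists_lt_of_lt hφm hφconv hd hc hw hg hgm hE hB ht hlt
    refine ⟨t', ht', htt', hlt', fun s hs hts => ?_⟩
    rcases hts.eq_or_lt with rfl | hts
    · exact hlt'.le
    · exact le_of_le_of_weight_le hφm hφconv hd hc hw hg hE hB ht' hs hts.ne hlt'.le
        ((hB.nonneg t' ht').trans_lt hlt') (hgm ht' hs hts.le)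

/-- Proposition 2 (equilibrium consumption is more backloaded than
efficient).  `vE` is the (unique) maximizer of Problem E(T): maximize
`∑_{t=1}^{T-1} β^(t-1) v t + β^(T-2) δ₁ v T` over `v t ≥ 0` with
`∑ φ(v t)/R^(t-1) ≤ I`, where `β = q₁δ₁ + q₂δ₂`; `vB` is the (unique) maximizer of
Problem B(T): maximize `∑_{t=1}^{T} δ₁^(t-1) v t` over the same constraint set.
Conclusions: (i) `vB 1 ≥ vE 1`; (ii) if `vE t ≥ vB t` and `vE t > 0` then
`vE s ≥ vB s` for all `s > t`, strictly for every `s > t` with `vE s > 0` provided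
`t ≤ T-2`; (iii) if `vB t > vE t` then there is `t' > t` with `vB t' < vE t'`, and
`vE s ≥ vB s` for all `s ≥ t'`. -/
theorem stmt0
    (T : ℕ) (hT : 3 ≤ T)
    (R I : ℝ) (hR : 1 ≤ R) (hI : 0 < I)
    (φ : ℝ → ℝ)
    (hφc : ContinuousOn φ (Set.Ici 0))
    (hφm : StrictMonoOn φ (Set.Ici 0))
    (hφconv : StrictConvexOn ℝ (Set.Ici 0) φ)
    (hφd : ContDiffOn ℝ 2 φ (Set.Ioi 0))
    (hφ0 : φ 0 = 0)
    (hφtend : Filter.Tendsto (deriv φ) Filter.atTop Filter.atTop)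
    (δ1 δ2 q1 q2 β : ℝ) (hδ1 : 0 < δ1) (hδ12 : δ1 < δ2)
    (hq1 : 0 < q1) (hq2 : 0 < q2) (hqsum : q1 + q2 = 1)
    (hβ : β = q1 * δ1 + q2 * δ2)
    (vB vE : ℕ → ℝ)
    -- vB solves Problem B(T)
    (hBnonneg : ∀ t ∈ Finset.Icc 1 T, 0 ≤ vB t)
    (hBbudget : ∑ t ∈ Finset.Icc 1 T, φ (vB t) / R ^ (t - 1) ≤ I)
    (hBmax : ∀ v : ℕ → ℝ, (∀ t ∈ Finset.Icc 1 T, 0 ≤ v t) →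
      (∑ t ∈ Finset.Icc 1 T, φ (v t) / R ^ (t - 1) ≤ I) →
      ∑ t ∈ Finset.Icc 1 T, δ1 ^ (t - 1) * v t ≤ ∑ t ∈ Finset.Icc 1 T, δ1 ^ (t - 1) * vB t)
    -- vE solves Problem E(T)
    (hEnonneg : ∀ t ∈ Finset.Icc 1 T, 0 ≤ vE t)
    (hEbudget : ∑ t ∈ Finset.Icc 1 T, φ (vE t) / R ^ (t - 1) ≤ I)
    (hEmax : ∀ v : ℕ → ℝ, (∀ t ∈ Finset.Icc 1 T, 0 ≤ v t) →
      (∑ t ∈ Finset.Icc 1 T, φ (v t) / R ^ (t - 1) ≤ I) →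
      (∑ t ∈ Finset.Icc 1 (T - 1), β ^ (t - 1) * v t) + β ^ (T - 2) * δ1 * v T ≤
        (∑ t ∈ Finset.Icc 1 (T - 1), β ^ (t - 1) * vE t) + β ^ (T - 2) * δ1 * vE T) :
    -- (i)
    (vE 1 ≤ vB 1) ∧
    -- (ii)
    (∀ t ∈ Finset.Icc 1 T, vB t ≤ vE t → 0 < vE t →
      (∀ s ∈ Finset.Icc 1 T, t < s → vB s ≤ vE s) ∧
      (t ≤ T - 2 → ∀ s ∈ Finset.Icc 1 T, t < s → 0 < vE s → vB s < vE s)) ∧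
    -- (iii)
    (∀ t ∈ Finset.Icc 1 T, vE t < vB t →
      ∃ t' ∈ Finset.Icc 1 T, t < t' ∧ vB t' < vE t' ∧
        ∀ s ∈ Finset.Icc 1 T, t' ≤ s → vB s ≤ vE s) :=
  stmt0_general T hT R I hR φ hφm hφconv hφd δ1 δ2 q1 q2 β hδ1 hδ12 hq2 hqsum hβ vB vE hBnonneg
    hBbudget hBmax hEnonneg hEbudget hEmax
end

section
/- Corollary 1 (Crossing point). Suppose in addition that v^{B,T}_t > 0 for every t ∈ {1,…,T}. Then there exists t* ∈ {2,…,T−1} such that v^{E,T}_t < v^{B,T}_t for all t < t* and v^{E,T}_t > v^{B,T}_t for all t > t*. -/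
/-!
An optimal plan equalizes, across periods with positive consumption, the weight `w t` per unit of
marginal cost `φ' (v t) / p t`; where a plan might vanish, a one-sided version with a chord slope
of `φ` still holds. The weights of Problem E are those of Problem B multiplied by
`κ t = (β / δ₁) ^ (min t (T - 1) - 1)`, which is nondecreasing in `t` and strictly increasing
except from `T - 1` to `T`. Comparing the two first-order conditions at `s < t` (using that `φ'` is
positive and strictly increasing) shows that once E consumes at least as much as B, it consumes
strictly more at every later period with larger `κ`. Both plans exhaust the budget, so neither
dominates the other; hence E starts below B, ends above it, and the two paths cross exactly once.
-/

open Finset Filter Topology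

theorem Finset.sum_apply_update {ι : Type*} [DecidableEq ι] {S : Finset ι} {f : ι → ℝ → ℝ} {s : ι}
    (hs : s ∈ S) (v : ι → ℝ) (a : ℝ) :
    ∑ x ∈ S, f x (Function.update v s a x) = ∑ x ∈ S, f x (v x) + (f s a - f s (v s)) := by
  simp_rw [Function.apply_update f, sum_update_of_mem hs,
    sum_eq_add_sum_sdiff_singleton_of_mem hs (fun x => f x (v x))]
  ring

theorem StrictMonoOn.deriv_pos_of_convexOn {f : ℝ → ℝ} (hm : StrictMonoOn f (Set.Ici 0))
    (hc : ConvexOn ℝ (Set.Ici 0) f) {x : ℝ} (hx : 0 < x) (hd : DifferentiableAt ℝ f x) :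
    0 < deriv f x := by
  refine lt_of_lt_of_le ?_ (hc.slope_le_deriv Set.self_mem_Ici hx.le hx hd)
  rw [slope_def_field]
  exact div_pos (sub_pos.mpr (hm Set.self_mem_Ici hx.le hx)) (sub_pos.mpr hx)

section

variable {ι : Type*} {S : Finset ι} {φ : ℝ → ℝ} {p w v : ι → ℝ} {I : ℝ}

structure IsOptimalPlan (S : Finset ι) (φ : ℝ → ℝ) (p w : ι → ℝ) (I : ℝ) (v : ι → ℝ) : Prop where
  nonneg : ∀ x ∈ S, 0 ≤ v x
  budget_le : ∑ x ∈ S, φ (v x) / p x ≤ I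
  sum_mul_le : ∀ u : ι → ℝ, (∀ x ∈ S, 0 ≤ u x) → ∑ x ∈ S, φ (u x) / p x ≤ I →
    ∑ x ∈ S, w x * u x ≤ ∑ x ∈ S, w x * v x

namespace IsOptimalPlan

theorem exchange (hv : IsOptimalPlan S φ p w I v) {s t : ι} (hs : s ∈ S) (ht : t ∈ S)
    (hst : s ≠ t) {a b : ℝ} (ha : 0 ≤ a) (hb : 0 ≤ b)
    (hcost : φ a / p s + φ b / p t ≤ φ (v s) / p s + φ (v t) / p t) :
    w s * a + w t * b ≤ w s * v s + w t * v t := by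
  classical
  have hsum (f : ι → ℝ → ℝ) : ∑ x ∈ S, f x (Function.update (Function.update v s a) t b x) =
      ∑ x ∈ S, f x (v x) + (f s a - f s (v s)) + (f t b - f t (v t)) := by
    rw [sum_apply_update ht, sum_apply_update hs, Function.update_of_ne hst.symm]
  have hu : ∀ x ∈ S, 0 ≤ Function.update (Function.update v s a) t b x := by
    intro x hx
    simp only [Function.update_apply]
    split_ifs
    exacts [hb, ha, hv.nonneg x hx]
  have := hv.sum_mul_le _ hu (by rw [hsum fun x y => φ y / p x]; linarith [hv.budget_le])
  rw [hsum fun x y => w x * y] at this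
  linarith

theorem budget_eq (hv : IsOptimalPlan S φ p w I v) (hφ : ContinuousOn φ (Set.Ici 0)) {s : ι}
    (hs : s ∈ S) (hws : 0 < w s) : ∑ x ∈ S, φ (v x) / p x = I := by
  classical
  refine hv.budget_le.eq_of_not_lt fun hlt => ?_
  have hcont : Tendsto (fun y => φ y / p s) (𝓝[>] (v s)) (𝓝 (φ (v s) / p s)) :=
    ((hφ.continuousWithinAt (hv.nonneg s hs)).div_const _).tendsto.mono_left
      (nhdsWithin_mono _ fun y hy => (hv.nonneg s hs).trans (le_of_lt hy))
  obtain ⟨y, hy, hvy⟩ := ((hcont.eventually_lt_const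
    (lt_add_of_pos_right _ (sub_pos.mpr hlt))).and self_mem_nhdsWithin).exists
  have hu : ∀ x ∈ S, 0 ≤ Function.update v s y x := by
    intro x hx
    simp only [Function.update_apply]
    split_ifs
    exacts [(hv.nonneg s hs).trans (le_of_lt hvy), hv.nonneg x hx]
  have := hv.sum_mul_le _ hu (by rw [sum_apply_update (f := fun x y => φ y / p x) hs]; linarith)
  rw [sum_apply_update (f := fun x y => w x * y) hs] at this
  nlinarith

theorem eq_of_le (hv : IsOptimalPlan S φ p w I v) (hφc : ContinuousOn φ (Set.Ici 0))
    (hφm : StrictMonoOn φ (Set.Ici 0)) (hp : ∀ x ∈ S, 0 < p x) {s : ι} (hs : s ∈ S) (hws : 0 < w s)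
    {u : ι → ℝ} (hu : ∑ x ∈ S, φ (u x) / p x ≤ I) (hle : ∀ x ∈ S, v x ≤ u x) :
    ∀ x ∈ S, v x = u x := by
  by_contra! ⟨x, hx, hne⟩
  have hlt : ∑ x ∈ S, φ (v x) / p x < ∑ x ∈ S, φ (u x) / p x := by
    refine sum_lt_sum (fun y hy => ?_) ⟨x, hx, ?_⟩
    · have := hv.nonneg y hy
      exact div_le_div_of_nonneg_right (hφm.monotoneOn this (this.trans (hle y hy)) (hle y hy))
        (hp y hy).le
    · have := hv.nonneg x hx
      exact div_lt_div_of_pos_right (hφm this (this.trans (hle x hx)) ((hle x hx).lt_of_ne hne))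
        (hp x hx)
  linarith [hv.budget_eq hφc hs hws]

theorem mul_sub_mul_le (hv : IsOptimalPlan S φ p w I v)
    (hφm : StrictMonoOn φ (Set.Ici 0)) (hφconv : ConvexOn ℝ (Set.Ici 0) φ) (hp : ∀ x ∈ S, 0 < p x)
    {s t : ι} (hs : s ∈ S) (ht : t ∈ S) (hst : s ≠ t) {a y : ℝ} (ha : 0 ≤ a) (hav : a ≤ v s)
    (hy : v t < y) (hsave : (φ (v s) - φ a) / p s ≤ (φ y - φ (v t)) / p t) :
    w t * (y - v t) * ((φ (v s) - φ a) / p s) ≤ w s * (v s - a) * ((φ y - φ (v t)) / p t) := by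
  set cs := (φ (v s) - φ a) / p s
  set ct := (φ y - φ (v t)) / p t
  have hvt := hv.nonneg t ht
  have hct : 0 < ct := div_pos (sub_pos.mpr (hφm hvt (hvt.trans hy.le) hy)) (hp t ht)
  have hcs : 0 ≤ cs := div_nonneg (sub_nonneg.mpr (hφm.monotoneOn ha (ha.trans hav) hav))
    (hp s hs).le
  set θ := cs / ct
  have hθ0 : 0 ≤ θ := div_nonneg hcs hct.le
  have hθ1 : θ ≤ 1 := (div_le_one hct).mpr hsave
  -- buy the fraction `θ` of the chord from `v t` to `y` with the budget saved at `s`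
  have hchord : φ (v t + θ * (y - v t)) ≤ φ (v t) + θ * (φ y - φ (v t)) := by
    have := hφconv.2 hvt (hvt.trans hy.le) (sub_nonneg.mpr hθ1) hθ0 (by ring)
    simp only [smul_eq_mul] at this
    rw [show (1 - θ) * v t + θ * y = v t + θ * (y - v t) by ring] at this
    linarith
  have hθct : θ * ct = cs := div_mul_cancel₀ cs hct.ne'
  have hcost : φ a / p s + φ (v t + θ * (y - v t)) / p t ≤ φ (v s) / p s + φ (v t) / p t := by
    have h : φ (v t + θ * (y - v t)) / p t ≤ (φ (v t) + θ * (φ y - φ (v t))) / p t :=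
      div_le_div_of_nonneg_right hchord (hp t ht).le
    have e1 : (φ (v t) + θ * (φ y - φ (v t))) / p t = φ (v t) / p t + θ * ct := by
      simp only [ct]; ring
    have e2 : φ a / p s = φ (v s) / p s - cs := by ring
    linarith
  have hgain : w t * θ * (y - v t) ≤ w s * (v s - a) := by
    linarith [hv.exchange hs ht hst ha (by nlinarith) hcost]
  calc w t * (y - v t) * cs = w t * θ * (y - v t) * ct := by rw [← hθct]; ring
    _ ≤ w s * (v s - a) * ct := mul_le_mul_of_nonneg_right hgain hct.le

theorem mul_deriv_le_mul_slope (hv : IsOptimalPlan S φ p w I v)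
    (hφm : StrictMonoOn φ (Set.Ici 0)) (hφconv : ConvexOn ℝ (Set.Ici 0) φ) (hp : ∀ x ∈ S, 0 < p x)
    {s t : ι} (hs : s ∈ S) (ht : t ∈ S) (hst : s ≠ t) (hvs : 0 < v s)
    (hd : DifferentiableAt ℝ φ (v s)) {y : ℝ} (hy : v t < y) :
    w t * p t * deriv φ (v s) ≤ w s * p s * slope φ (v t) y := by
  set ct := (φ y - φ (v t)) / p t
  have hct : 0 < ct :=
    div_pos (sub_pos.mpr (hφm (hv.nonneg t ht) ((hv.nonneg t ht).trans hy.le) hy)) (hp t ht)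
  have hlim : Tendsto (fun h => w t * (y - v t) * (h⁻¹ * (φ (v s + h) - φ (v s))) / p s)
      (𝓝[<] 0) (𝓝 (w t * (y - v t) * deriv φ (v s) / p s)) :=
    (hd.hasDerivAt.tendsto_slope_zero_left.const_mul _).div_const _
  have hsave : Tendsto (fun h => (φ (v s) - φ (v s + h)) / p s) (𝓝[<] 0) (𝓝 0) := by
    have : Tendsto (fun h => v s + h) (𝓝[<] 0) (𝓝 (v s)) :=
      tendsto_nhdsWithin_of_tendsto_nhds (by simpa using (continuous_const_add (v s)).tendsto 0)
    simpa using ((hd.continuousAt.tendsto.comp this).const_sub (φ (v s))).div_const (p s)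
  have hev : ∀ᶠ h in 𝓝[<] (0 : ℝ),
      w t * (y - v t) * (h⁻¹ * (φ (v s + h) - φ (v s))) / p s ≤ w s * ct := by
    filter_upwards [self_mem_nhdsWithin, hsave.eventually_lt_const hct,
      eventually_nhdsWithin_of_eventually_nhds (eventually_gt_nhds (neg_lt_zero.mpr hvs))]
      with h (hneg : h < 0) hsmall hpos
    have := hv.mul_sub_mul_le hφm hφconv hp hs ht hst (a := v s + h) (by linarith) (by linarith)
      hy hsmall.le
    rw [show w t * (y - v t) * (h⁻¹ * (φ (v s + h) - φ (v s))) / p s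
        = w t * (y - v t) * ((φ (v s) - φ (v s + h)) / p s) / -h by field_simp; ring,
      div_le_iff₀ (neg_pos.mpr hneg)]
    linarith
  have hlimit := le_of_tendsto hlim hev
  rw [div_le_iff₀ (hp s hs)] at hlimit
  have hct_mul : φ y - φ (v t) = ct * p t := (div_mul_cancel₀ _ (hp t ht).ne').symm
  rw [slope_def_field, mul_div_assoc', le_div_iff₀ (sub_pos.mpr hy), hct_mul]
  nlinarith [mul_le_mul_of_nonneg_right hlimit (hp t ht).le]

theorem mul_deriv_le_mul_deriv (hv : IsOptimalPlan S φ p w I v)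
    (hφm : StrictMonoOn φ (Set.Ici 0)) (hφconv : ConvexOn ℝ (Set.Ici 0) φ) (hp : ∀ x ∈ S, 0 < p x)
    {s t : ι} (hs : s ∈ S) (ht : t ∈ S) (hst : s ≠ t) (hws : 0 ≤ w s) (hvs : 0 < v s)
    (hds : DifferentiableAt ℝ φ (v s)) {y : ℝ} (hy : v t ≤ y) (hdy : DifferentiableAt ℝ φ y) :
    w t * p t * deriv φ (v s) ≤ w s * p s * deriv φ y := by
  rcases hy.lt_or_eq with hlt | rfl
  · refine (hv.mul_deriv_le_mul_slope hφm hφconv hp hs ht hst hvs hds hlt).trans ?_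
    exact mul_le_mul_of_nonneg_left
      (hφconv.slope_le_deriv (hv.nonneg t ht) ((hv.nonneg t ht).trans hlt.le) hlt hdy)
      (mul_nonneg hws (hp s hs).le)
  · refine ge_of_tendsto ((hdy.hasDerivAt.tendsto_slope.mono_left (nhdsGT_le_nhdsNE _)).const_mul
      (w s * p s)) ?_
    filter_upwards [self_mem_nhdsWithin] with z hz
    exact hv.mul_deriv_le_mul_slope hφm hφconv hp hs ht hst hvs hds hz

variable {wB κ vB vE : ι → ℝ}

theorem mul_deriv_le_of_cross (hB : IsOptimalPlan S φ p wB I vB)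
    (hE : IsOptimalPlan S φ p (fun x => κ x * wB x) I vE)
    (hφm : StrictMonoOn φ (Set.Ici 0)) (hφconv : ConvexOn ℝ (Set.Ici 0) φ)
    (hφd : ∀ x ∈ Set.Ioi 0, DifferentiableAt ℝ φ x) (hp : ∀ x ∈ S, 0 < p x)
    (hwB : ∀ x ∈ S, 0 < wB x) {s t : ι} (hs : s ∈ S) (ht : t ∈ S) (hst : s ≠ t)
    (hκs : 0 ≤ κ s) (hBs : 0 < vB s) (hBt : 0 < vB t) (hles : vB s ≤ vE s) (hlet : vE t ≤ vB t) :
    κ t * deriv φ (vE s) ≤ κ s * deriv φ (vB s) := by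
  have hBeq : wB t * p t * deriv φ (vB s) = wB s * p s * deriv φ (vB t) :=
    le_antisymm
      (hB.mul_deriv_le_mul_deriv hφm hφconv hp hs ht hst (hwB s hs).le hBs (hφd _ hBs) le_rfl
        (hφd _ hBt))
      (hB.mul_deriv_le_mul_deriv hφm hφconv hp ht hs hst.symm (hwB t ht).le hBt (hφd _ hBt)
        le_rfl (hφd _ hBs))
  have hE' := hE.mul_deriv_le_mul_deriv hφm hφconv hp hs ht hst
    (mul_nonneg hκs (hwB s hs).le) (hBs.trans_le hles) (hφd _ (hBs.trans_le hles)) hlet (hφd _ hBt)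
  have hpos : 0 < wB t * p t := mul_pos (hwB t ht) (hp t ht)
  refine le_of_mul_le_mul_left ?_ hpos
  calc wB t * p t * (κ t * deriv φ (vE s)) = κ t * wB t * p t * deriv φ (vE s) := by ring
    _ ≤ κ s * wB s * p s * deriv φ (vB t) := hE'
    _ = κ s * (wB s * p s * deriv φ (vB t)) := by ring
    _ = wB t * p t * (κ s * deriv φ (vB s)) := by rw [← hBeq]; ring

theorem lt_of_ratio_lt (hB : IsOptimalPlan S φ p wB I vB)
    (hE : IsOptimalPlan S φ p (fun x => κ x * wB x) I vE)
    (hφm : StrictMonoOn φ (Set.Ici 0)) (hφconv : ConvexOn ℝ (Set.Ici 0) φ)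
    (hφd : ∀ x ∈ Set.Ioi 0, DifferentiableAt ℝ φ x) (hp : ∀ x ∈ S, 0 < p x)
    (hwB : ∀ x ∈ S, 0 < wB x) {s t : ι} (hs : s ∈ S) (ht : t ∈ S) (hst : s ≠ t)
    (hκs : 0 ≤ κ s) (hBs : 0 < vB s) (hBt : 0 < vB t) (hκ : κ s < κ t) (hles : vB s ≤ vE s) :
    vB t < vE t := by
  by_contra! hlet
  have hcross := hB.mul_deriv_le_of_cross hE hφm hφconv hφd hp hwB hs ht hst hκs hBs hBt hles hlet
  have hmono : deriv φ (vB s) ≤ deriv φ (vE s) :=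
    (hφconv.subset Set.Ioi_subset_Ici_self (convex_Ioi 0)).monotoneOn_deriv hφd hBs
      (hBs.trans_le hles) hles
  have hpos := hφm.deriv_pos_of_convexOn hφconv hBs (hφd _ hBs)
  nlinarith

theorem lt_of_ratio_le (hB : IsOptimalPlan S φ p wB I vB)
    (hE : IsOptimalPlan S φ p (fun x => κ x * wB x) I vE)
    (hφm : StrictMonoOn φ (Set.Ici 0)) (hφconv : StrictConvexOn ℝ (Set.Ici 0) φ)
    (hφd : ∀ x ∈ Set.Ioi 0, DifferentiableAt ℝ φ x) (hp : ∀ x ∈ S, 0 < p x)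
    (hwB : ∀ x ∈ S, 0 < wB x) {s t : ι} (hs : s ∈ S) (ht : t ∈ S) (hst : s ≠ t)
    (hκs : 0 < κ s) (hBs : 0 < vB s) (hBt : 0 < vB t) (hκ : κ s ≤ κ t) (hlts : vB s < vE s) :
    vB t < vE t := by
  by_contra! hlet
  have hcross := hB.mul_deriv_le_of_cross hE hφm hφconv.convexOn hφd hp hwB hs ht hst hκs.le hBs
    hBt hlts.le hlet
  have hmono : deriv φ (vB s) < deriv φ (vE s) :=
    (hφconv.subset Set.Ioi_subset_Ici_self (convex_Ioi 0)).strictMonoOn_deriv hφd hBs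
      (hBs.trans hlts) hlts
  have hpos := hφm.deriv_pos_of_convexOn hφconv.convexOn hBs (hφd _ hBs)
  nlinarith

end IsOptimalPlan

end

theorem exists_sign_change {α : Type*} [LinearOrder α] {T : ℕ} (hT : 3 ≤ T) {a b : ℕ → α}
    (hge : (∀ t ∈ Icc 1 T, b t ≤ a t) → ∀ t ∈ Icc 1 T, b t = a t)
    (hle : (∀ t ∈ Icc 1 T, a t ≤ b t) → ∀ t ∈ Icc 1 T, a t = b t)
    (hcross : ∀ s t, 1 ≤ s → s < t → t ≤ T → (s ≠ T - 1 ∨ t ≠ T) → b s ≤ a s → b t < a t)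
    (hlast : b (T - 1) < a (T - 1) → b T < a T) :
    ∃ tstar ∈ Icc 2 (T - 1),
      (∀ t ∈ Icc 1 T, t < tstar → a t < b t) ∧ (∀ t ∈ Icc 1 T, tstar < t → b t < a t) := by
  have hfirst : a 1 < b 1 := by
    by_contra! h1
    have hlater : ∀ t, 2 ≤ t → t ≤ T → b t < a t := fun t h2 htT =>
      hcross 1 t le_rfl (by omega) htT (by omega) h1
    refine (hlater 2 le_rfl (by omega)).ne (hge (fun t ht => ?_) 2 (by simp; omega))
    rcases (mem_Icc.mp ht).1.eq_or_lt with rfl | h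
    exacts [h1, (hlater t h (mem_Icc.mp ht).2).le]
  have hfinal : b T < a T := by
    by_contra! hT'
    refine hfirst.ne (hle (fun t ht => ?_) 1 (by simp; omega))
    obtain ⟨h1, htT⟩ := mem_Icc.mp ht
    by_contra! hlt
    rcases (show t = T ∨ t = T - 1 ∨ t < T - 1 by omega) with rfl | rfl | h
    · exact hT'.not_gt hlt
    · exact hT'.not_gt (hlast hlt)
    · exact hT'.not_gt (hcross t T h1 (by omega) le_rfl (by omega) hlt.le)
  classical
  have hex : ∃ n, 1 ≤ n ∧ b n ≤ a n := ⟨T, by omega, hfinal.le⟩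
  set n := Nat.find hex
  obtain ⟨hn1, hn⟩ : 1 ≤ n ∧ b n ≤ a n := Nat.find_spec hex
  have hnT : n ≤ T := Nat.find_min' hex ⟨by omega, hfinal.le⟩
  have hn2 : n ≠ 1 := fun h => hfirst.not_ge (h ▸ hn)
  refine ⟨min n (T - 1), by simp; omega, fun t ht htn => ?_, fun t ht htn => ?_⟩
  · have := Nat.find_min hex (lt_of_lt_of_le htn (min_le_left _ _))
    push Not at this
    exact this (mem_Icc.mp ht).1
  · obtain ⟨h1, htT⟩ := mem_Icc.mp ht
    rcases htT.eq_or_lt with rfl | htT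
    · exact hfinal
    · exact hcross n t hn1 (by omega) htT.le (Or.inr htT.ne) hn

theorem sum_Icc_div_pow_min_mul {β δ : ℝ} (hδ : δ ≠ 0) {T : ℕ} (hT : 2 ≤ T) (u : ℕ → ℝ) :
    ∑ x ∈ Icc 1 T, (β / δ) ^ (min x (T - 1) - 1) * δ ^ (x - 1) * u x =
      ∑ x ∈ Icc 1 (T - 1), β ^ (x - 1) * u x + β ^ (T - 2) * δ * u T := by
  obtain ⟨n, rfl⟩ : ∃ n, T = n + 1 := ⟨T - 1, by omega⟩
  rw [sum_Icc_succ_top (by omega), Nat.add_sub_cancel, min_eq_right (by omega),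
    show n + 1 - 2 = n - 1 by omega]
  congr 1
  · refine sum_congr rfl fun x hx => ?_
    rw [min_eq_left (mem_Icc.mp hx).2, div_pow, div_mul_cancel₀ _ (pow_ne_zero _ hδ)]
  · rw [show n = n - 1 + 1 by omega, Nat.add_sub_cancel, pow_succ δ, div_pow]
    field_simp

theorem stmt1_general
    (T : ℕ) (hT : 3 ≤ T)
    (R I : ℝ) (hR : 1 ≤ R)
    (φ : ℝ → ℝ)
    (hφc : ContinuousOn φ (Set.Ici 0))
    (hφm : StrictMonoOn φ (Set.Ici 0))
    (hφconv : StrictConvexOn ℝ (Set.Ici 0) φ)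
    (hφd : ContDiffOn ℝ 2 φ (Set.Ioi 0))
    (δ1 δ2 q1 q2 β : ℝ) (hδ1 : 0 < δ1) (hδ12 : δ1 < δ2)
    (hq2 : 0 < q2) (hqsum : q1 + q2 = 1)
    (hβ : β = q1 * δ1 + q2 * δ2)
    (vB vE : ℕ → ℝ)
    -- vB solves Problem B(T)
    (hBnonneg : ∀ t ∈ Finset.Icc 1 T, 0 ≤ vB t)
    (hBbudget : ∑ t ∈ Finset.Icc 1 T, φ (vB t) / R ^ (t - 1) ≤ I)
    (hBmax : ∀ v : ℕ → ℝ, (∀ t ∈ Finset.Icc 1 T, 0 ≤ v t) →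
      (∑ t ∈ Finset.Icc 1 T, φ (v t) / R ^ (t - 1) ≤ I) →
      ∑ t ∈ Finset.Icc 1 T, δ1 ^ (t - 1) * v t ≤ ∑ t ∈ Finset.Icc 1 T, δ1 ^ (t - 1) * vB t)
    -- vE solves Problem E(T)
    (hEnonneg : ∀ t ∈ Finset.Icc 1 T, 0 ≤ vE t)
    (hEbudget : ∑ t ∈ Finset.Icc 1 T, φ (vE t) / R ^ (t - 1) ≤ I)
    (hEmax : ∀ v : ℕ → ℝ, (∀ t ∈ Finset.Icc 1 T, 0 ≤ v t) →
      (∑ t ∈ Finset.Icc 1 T, φ (v t) / R ^ (t - 1) ≤ I) →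
      (∑ t ∈ Finset.Icc 1 (T - 1), β ^ (t - 1) * v t) + β ^ (T - 2) * δ1 * v T ≤
        (∑ t ∈ Finset.Icc 1 (T - 1), β ^ (t - 1) * vE t) + β ^ (T - 2) * δ1 * vE T)
    -- additional positivity hypothesis
    (hBpos : ∀ t ∈ Finset.Icc 1 T, 0 < vB t) :
    ∃ tstar ∈ Finset.Icc 2 (T - 1),
      (∀ t ∈ Finset.Icc 1 T, t < tstar → vE t < vB t) ∧
      (∀ t ∈ Finset.Icc 1 T, tstar < t → vB t < vE t) := by
  have hβδ : 1 < β / δ1 := (one_lt_div hδ1).mpr (by rw [hβ]; nlinarith)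
  -- E's weight `β ^ (t - 1)` (resp. `β ^ (T - 2) * δ1` at `t = T`) is `κ t * δ1 ^ (t - 1)`
  set κ : ℕ → ℝ := fun x => (β / δ1) ^ (min x (T - 1) - 1)
  have hκpos : ∀ x, 0 < κ x := fun x => pow_pos (one_pos.trans hβδ) _
  have hp : ∀ x ∈ Icc 1 T, 0 < R ^ (x - 1) := fun x _ => pow_pos (one_pos.trans_le hR) _
  have hwB : ∀ x ∈ Icc 1 T, 0 < δ1 ^ (x - 1) := fun x _ => pow_pos hδ1 _
  have hφd' : ∀ x ∈ Set.Ioi 0, DifferentiableAt ℝ φ x := fun x hx =>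
    (hφd.differentiableOn two_ne_zero).differentiableAt (Ioi_mem_nhds hx)
  have hB : IsOptimalPlan (Icc 1 T) φ (fun x => R ^ (x - 1)) (fun x => δ1 ^ (x - 1)) I vB :=
    ⟨hBnonneg, hBbudget, hBmax⟩
  have hE : IsOptimalPlan (Icc 1 T) φ (fun x => R ^ (x - 1)) (fun x => κ x * δ1 ^ (x - 1)) I vE :=
    ⟨hEnonneg, hEbudget, fun u hu hub => by
      simpa only [κ, sum_Icc_div_pow_min_mul hδ1.ne' (by omega : 2 ≤ T)] using hEmax u hu hub⟩
  have hmem {t : ℕ} (h1 : 1 ≤ t) (htT : t ≤ T) : t ∈ Icc 1 T := mem_Icc.mpr ⟨h1, htT⟩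
  have h1 : 1 ∈ Icc 1 T := hmem le_rfl (by omega)
  refine exists_sign_change hT
    (hB.eq_of_le hφc hφm hp h1 (hwB 1 h1) hEbudget)
    (hE.eq_of_le hφc hφm hp h1 (mul_pos (hκpos 1) (hwB 1 h1)) hBbudget)
    (fun s t hs hst ht hne => ?_) (fun hlt => ?_)
  · exact hB.lt_of_ratio_lt hE hφm hφconv.convexOn hφd' hp hwB (hmem hs (by omega))
      (hmem (by omega) ht) hst.ne (hκpos s).le (hBpos s (hmem hs (by omega)))
      (hBpos t (hmem (by omega) ht)) (pow_lt_pow_right₀ hβδ (by omega))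
  · exact hB.lt_of_ratio_le hE hφm hφconv hφd' hp hwB (hmem (by omega) (by omega))
      (hmem (by omega) le_rfl) (by omega) (hκpos _) (hBpos _ (hmem (by omega) (by omega)))
      (hBpos _ (hmem (by omega) le_rfl)) (pow_le_pow_right₀ hβδ.le (by omega)) hlt

/-- Corollary 1 (crossing point).  With `vE` the (unique) maximizer of
Problem E(T) and `vB` the (unique) maximizer of Problem B(T) as in Proposition 2, if
additionally `vB t > 0` for every `t ∈ {1,…,T}`, then there is `t* ∈ {2,…,T-1}` such
that `vE t < vB t` for all `t < t*` and `vE t > vB t` for all `t > t*` (with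
`t ∈ {1,…,T}`). -/
theorem stmt1
    (T : ℕ) (hT : 3 ≤ T)
    (R I : ℝ) (hR : 1 ≤ R) (hI : 0 < I)
    (φ : ℝ → ℝ)
    (hφc : ContinuousOn φ (Set.Ici 0))
    (hφm : StrictMonoOn φ (Set.Ici 0))
    (hφconv : StrictConvexOn ℝ (Set.Ici 0) φ)
    (hφd : ContDiffOn ℝ 2 φ (Set.Ioi 0))
    (hφ0 : φ 0 = 0)
    (hφtend : Filter.Tendsto (deriv φ) Filter.atTop Filter.atTop)
    (δ1 δ2 q1 q2 β : ℝ) (hδ1 : 0 < δ1) (hδ12 : δ1 < δ2)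
    (hq1 : 0 < q1) (hq2 : 0 < q2) (hqsum : q1 + q2 = 1)
    (hβ : β = q1 * δ1 + q2 * δ2)
    (vB vE : ℕ → ℝ)
    -- vB solves Problem B(T)
    (hBnonneg : ∀ t ∈ Finset.Icc 1 T, 0 ≤ vB t)
    (hBbudget : ∑ t ∈ Finset.Icc 1 T, φ (vB t) / R ^ (t - 1) ≤ I)
    (hBmax : ∀ v : ℕ → ℝ, (∀ t ∈ Finset.Icc 1 T, 0 ≤ v t) →
      (∑ t ∈ Finset.Icc 1 T, φ (v t) / R ^ (t - 1) ≤ I) →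
      ∑ t ∈ Finset.Icc 1 T, δ1 ^ (t - 1) * v t ≤ ∑ t ∈ Finset.Icc 1 T, δ1 ^ (t - 1) * vB t)
    -- vE solves Problem E(T)
    (hEnonneg : ∀ t ∈ Finset.Icc 1 T, 0 ≤ vE t)
    (hEbudget : ∑ t ∈ Finset.Icc 1 T, φ (vE t) / R ^ (t - 1) ≤ I)
    (hEmax : ∀ v : ℕ → ℝ, (∀ t ∈ Finset.Icc 1 T, 0 ≤ v t) →
      (∑ t ∈ Finset.Icc 1 T, φ (v t) / R ^ (t - 1) ≤ I) →
      (∑ t ∈ Finset.Icc 1 (T - 1), β ^ (t - 1) * v t) + β ^ (T - 2) * δ1 * v T ≤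
        (∑ t ∈ Finset.Icc 1 (T - 1), β ^ (t - 1) * vE t) + β ^ (T - 2) * δ1 * vE T)
    -- additional positivity hypothesis
    (hBpos : ∀ t ∈ Finset.Icc 1 T, 0 < vB t) :
    ∃ tstar ∈ Finset.Icc 2 (T - 1),
      (∀ t ∈ Finset.Icc 1 T, t < tstar → vE t < vB t) ∧
      (∀ t ∈ Finset.Icc 1 T, tstar < t → vB t < vE t) :=
  stmt1_general T hT R I hR φ hφc hφm hφconv hφd δ1 δ2 q1 q2 β hδ1 hδ12 hq2 hqsum hβ vB vE hBnonneg
    hBbudget hBmax hEnonneg hEbudget hEmax hBpos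
end

section
/- Proposition 1 (Asymptotic optimality against the benchmark discount factor β). Suppose the benchmark problem is well-posed: the supremum of Σ_{t=1}^∞ β^{t−1} v_t over all nonnegative sequences (v_t)_{t∈ℕ} satisfying Σ_{t=1}^∞ φ(v_t)/R^{t−1} ≤ I_∞ is finite. For each horizon T ≥ 3 let W^A_T be the maximum of Σ_{t=1}^T β^{t−1} v_t over nonnegative (v_t) with Σ_{t=1}^T φ(v_t)/R^{t−1} ≤ I_T, and let W^E_T := Σ_{t=1}^T β^{t−1} v^{E,T}_t, where (v^{E,T}_t) is the unique maximizer of Problem E(T) with income I_T. Then W^A_T − W^E_T ≥ 0 for every T, and lim_{T→∞} (W^A_T − W^E_T) = 0. -/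
lemma aux_sum_ext {S T : ℕ} (hST : S ≤ T) (g : ℕ → ℝ → ℝ) (hg : ∀ t, g t 0 = 0) (v : ℕ → ℝ) :
    ∑ t ∈ Finset.Icc 1 T, g t (if t ≤ S then v t else 0) = ∑ t ∈ Finset.Icc 1 S, g t (v t) := by
  have h1 : ∑ t ∈ Finset.Icc 1 S, g t (if t ≤ S then v t else 0)
      = ∑ t ∈ Finset.Icc 1 T, g t (if t ≤ S then v t else 0) := by
    apply Finset.sum_subset (Finset.Icc_subset_Icc_right hST)
    intro t ht hnt
    have h : ¬ t ≤ S := fun h => hnt (Finset.mem_Icc.mpr ⟨(Finset.mem_Icc.mp ht).1, h⟩)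
    rw [if_neg h, hg]
  rw [← h1]
  exact Finset.sum_congr rfl fun t ht => by rw [if_pos (Finset.mem_Icc.mp ht).2]

lemma aux_split (f : ℕ → ℝ) {T : ℕ} (hT : 1 ≤ T) :
    ∑ t ∈ Finset.Icc 1 T, f t = (∑ t ∈ Finset.Icc 1 (T - 1), f t) + f T := by
  obtain ⟨n, rfl⟩ : ∃ n, T = n + 1 := ⟨T - 1, (Nat.succ_pred_eq_of_pos hT).symm⟩
  rw [← Finset.insert_Icc_right_eq_Icc_add_one (by omega), Finset.sum_insert (by simp)]
  simp [add_comm]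


/-- Proposition 1 (asymptotic optimality against the benchmark discount
factor `β = q₁δ₁ + q₂δ₂`).  `Iseq T` is a nondecreasing positive income sequence
converging to `Iinf`.  Well-posedness: the supremum of `∑ β^(t-1) v t` over
nonnegative sequences with `∑ φ(v t)/R^(t-1) ≤ Iinf` is finite (expressed via
uniformly bounded partial sums).  `WA T` is the maximum of `∑_{t=1}^T β^(t-1) v t`
over nonnegative `v` with `∑_{t=1}^T φ(v t)/R^(t-1) ≤ Iseq T`, and
`vE T` is the maximizer of Problem E(T) with income `Iseq T`, with
`WE T = ∑_{t=1}^T β^(t-1) (vE T) t`.  Then `WA T − WE T ≥ 0` for every `T ≥ 3` and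
`WA T − WE T → 0` as `T → ∞`. -/
theorem stmt2
    (R : ℝ) (hR : 1 ≤ R)
    (φ : ℝ → ℝ)
    (hφc : ContinuousOn φ (Set.Ici 0))
    (hφm : StrictMonoOn φ (Set.Ici 0))
    (hφconv : StrictConvexOn ℝ (Set.Ici 0) φ)
    (hφd : ContDiffOn ℝ 2 φ (Set.Ioi 0))
    (hφ0 : φ 0 = 0)
    (hφtend : Filter.Tendsto (deriv φ) Filter.atTop Filter.atTop)
    (δ1 δ2 q1 q2 β : ℝ) (hδ1 : 0 < δ1) (hδ12 : δ1 < δ2)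
    (hq1 : 0 < q1) (hq2 : 0 < q2) (hqsum : q1 + q2 = 1)
    (hβ : β = q1 * δ1 + q2 * δ2)
    (Iseq : ℕ → ℝ) (Iinf : ℝ)
    (hIpos : ∀ T, 3 ≤ T → 0 < Iseq T)
    (hImono : Monotone Iseq)
    (hIlim : Filter.Tendsto Iseq Filter.atTop (nhds Iinf))
    -- well-posedness of the benchmark (infinite-horizon) problem
    (hwell : ∃ M : ℝ, ∀ v : ℕ → ℝ, (∀ t, 1 ≤ t → 0 ≤ v t) →
      (∀ T : ℕ, ∑ t ∈ Finset.Icc 1 T, φ (v t) / R ^ (t - 1) ≤ Iinf) →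
      ∀ T : ℕ, ∑ t ∈ Finset.Icc 1 T, β ^ (t - 1) * v t ≤ M)
    -- WA T is the value of the benchmark problem with horizon T
    (WA : ℕ → ℝ)
    (hWAattained : ∀ T, 3 ≤ T → ∃ v : ℕ → ℝ,
      (∀ t ∈ Finset.Icc 1 T, 0 ≤ v t) ∧
      (∑ t ∈ Finset.Icc 1 T, φ (v t) / R ^ (t - 1) ≤ Iseq T) ∧
      ∑ t ∈ Finset.Icc 1 T, β ^ (t - 1) * v t = WA T)
    (hWAmax : ∀ T, 3 ≤ T → ∀ v : ℕ → ℝ, (∀ t ∈ Finset.Icc 1 T, 0 ≤ v t) →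
      (∑ t ∈ Finset.Icc 1 T, φ (v t) / R ^ (t - 1) ≤ Iseq T) →
      ∑ t ∈ Finset.Icc 1 T, β ^ (t - 1) * v t ≤ WA T)
    -- vE T is the maximizer of Problem E(T) with income Iseq T
    (vE : ℕ → ℕ → ℝ)
    (hEnonneg : ∀ T, 3 ≤ T → ∀ t ∈ Finset.Icc 1 T, 0 ≤ vE T t)
    (hEbudget : ∀ T, 3 ≤ T →
      ∑ t ∈ Finset.Icc 1 T, φ (vE T t) / R ^ (t - 1) ≤ Iseq T)
    (hEmax : ∀ T, 3 ≤ T → ∀ v : ℕ → ℝ, (∀ t ∈ Finset.Icc 1 T, 0 ≤ v t) →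
      (∑ t ∈ Finset.Icc 1 T, φ (v t) / R ^ (t - 1) ≤ Iseq T) →
      (∑ t ∈ Finset.Icc 1 (T - 1), β ^ (t - 1) * v t) + β ^ (T - 2) * δ1 * v T ≤
        (∑ t ∈ Finset.Icc 1 (T - 1), β ^ (t - 1) * vE T t) + β ^ (T - 2) * δ1 * vE T T) :
    (∀ T, 3 ≤ T → 0 ≤ WA T - ∑ t ∈ Finset.Icc 1 T, β ^ (t - 1) * vE T t) ∧
    Filter.Tendsto (fun T : ℕ => WA T - ∑ t ∈ Finset.Icc 1 T, β ^ (t - 1) * vE T t)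
      Filter.atTop (nhds 0) := by
  have hRpos : (0:ℝ) < R := lt_of_lt_of_le one_pos hR
  have hβpos : 0 < β := by nlinarith
  have hδβ : δ1 < β := by nlinarith
  have hφnn : ∀ x : ℝ, 0 ≤ x → 0 ≤ φ x := by
    intro x hx
    rcases eq_or_lt_of_le hx with h | h
    · rw [← h, hφ0]
    · have := hφm (Set.mem_Ici.mpr le_rfl) (Set.mem_Ici.mpr hx) h
      rw [hφ0] at this; exact this.le
  have hIle : ∀ T, Iseq T ≤ Iinf := fun T => hImono.ge_of_tendsto hIlim T
  obtain ⟨M, hM⟩ := hwell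
  set WE : ℕ → ℝ := fun T => ∑ t ∈ Finset.Icc 1 T, β ^ (t - 1) * vE T t with hWE
  have part1 : ∀ T, 3 ≤ T → 0 ≤ WA T - WE T := by
    intro T hT
    have := hWAmax T hT (vE T) (hEnonneg T hT) (hEbudget T hT)
    simpa [hWE] using sub_nonneg.mpr this
  -- properties of the zero-extension of an S-feasible plan
  have hext : ∀ S T : ℕ, 3 ≤ S → S ≤ T → ∀ v : ℕ → ℝ,
      (∀ t ∈ Finset.Icc 1 S, 0 ≤ v t) →
      (∑ t ∈ Finset.Icc 1 S, φ (v t) / R ^ (t - 1) ≤ Iseq S) →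
      (∀ t ∈ Finset.Icc 1 T, 0 ≤ (if t ≤ S then v t else 0 : ℝ)) ∧
      (∑ t ∈ Finset.Icc 1 T, φ ((if t ≤ S then v t else 0) : ℝ) / R ^ (t - 1) ≤ Iseq T) ∧
      (∑ t ∈ Finset.Icc 1 T, β ^ (t - 1) * (if t ≤ S then v t else 0)
        = ∑ t ∈ Finset.Icc 1 S, β ^ (t - 1) * v t) := by
    intro S T hS hST v hv0 hvb
    refine ⟨?_, ?_, ?_⟩
    · intro t ht
      by_cases h : t ≤ S
      · rw [if_pos h]
        exact hv0 t (Finset.mem_Icc.mpr ⟨(Finset.mem_Icc.mp ht).1, h⟩)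
      · rw [if_neg h]
    · calc ∑ t ∈ Finset.Icc 1 T, φ ((if t ≤ S then v t else 0) : ℝ) / R ^ (t - 1)
          = ∑ t ∈ Finset.Icc 1 S, φ (v t) / R ^ (t - 1) :=
            aux_sum_ext hST (fun t x => φ x / R ^ (t - 1)) (fun t => by simp [hφ0]) v
        _ ≤ Iseq S := hvb
        _ ≤ Iseq T := hImono hST
    · exact aux_sum_ext hST (fun t x => β ^ (t - 1) * x) (fun t => by simp) v
  -- WA is bounded above by M
  have hWAbdd : ∀ T, 3 ≤ T → WA T ≤ M := by
    intro T hT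
    obtain ⟨v, hv0, hvb, hvW⟩ := hWAattained T hT
    obtain ⟨hw0, hwb, hws⟩ := hext T T hT le_rfl v hv0 hvb
    have h1 : ∀ t, 1 ≤ t → 0 ≤ (if t ≤ T then v t else 0 : ℝ) := by
      intro t ht
      by_cases h : t ≤ T
      · rw [if_pos h]; exact hv0 t (Finset.mem_Icc.mpr ⟨ht, h⟩)
      · rw [if_neg h]
    have h2 : ∀ T' : ℕ,
        ∑ t ∈ Finset.Icc 1 T', φ ((if t ≤ T then v t else 0) : ℝ) / R ^ (t - 1) ≤ Iinf := by
      intro T'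
      have hsub : ∑ t ∈ Finset.Icc 1 T', φ ((if t ≤ T then v t else 0) : ℝ) / R ^ (t - 1)
          ≤ ∑ t ∈ Finset.Icc 1 (max T T'), φ ((if t ≤ T then v t else 0) : ℝ) / R ^ (t - 1) := by
        apply Finset.sum_le_sum_of_subset_of_nonneg
          (Finset.Icc_subset_Icc_right (le_max_right T T'))
        intro t ht _
        exact div_nonneg (hφnn _ (h1 t (Finset.mem_Icc.mp ht).1)) (pow_nonneg hRpos.le _)
      have heq : ∑ t ∈ Finset.Icc 1 (max T T'), φ ((if t ≤ T then v t else 0) : ℝ) / R ^ (t - 1)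
          = ∑ t ∈ Finset.Icc 1 T, φ (v t) / R ^ (t - 1) :=
        aux_sum_ext (le_max_left T T') (fun t x => φ x / R ^ (t - 1))
          (fun t => by simp [hφ0]) v
      calc ∑ t ∈ Finset.Icc 1 T', φ ((if t ≤ T then v t else 0) : ℝ) / R ^ (t - 1)
          ≤ ∑ t ∈ Finset.Icc 1 T, φ (v t) / R ^ (t - 1) := heq ▸ hsub
        _ ≤ Iseq T := hvb
        _ ≤ Iinf := hIle T
    have h3 : ∑ t ∈ Finset.Icc 1 T, β ^ (t - 1) * (if t ≤ T then v t else 0) ≤ M :=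
      hM (fun t => if t ≤ T then v t else 0) h1 h2 T
    rw [hws, hvW] at h3
    exact h3
  -- WA is monotone (for horizons ≥ 3)
  have hWAmono : ∀ S T, 3 ≤ S → S ≤ T → WA S ≤ WA T := by
    intro S T hS hST
    obtain ⟨v, hv0, hvb, hvW⟩ := hWAattained S hS
    obtain ⟨hw0, hwb, hws⟩ := hext S T hS hST v hv0 hvb
    have h3 : ∑ t ∈ Finset.Icc 1 T, β ^ (t - 1) * (if t ≤ S then v t else 0) ≤ WA T :=
      hWAmax T (le_trans hS hST) (fun t => if t ≤ S then v t else 0) hw0 hwb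
    rw [hws, hvW] at h3
    exact h3
  -- WE T dominates WA S whenever S + 1 ≤ T
  have hWEge : ∀ S T, 3 ≤ S → S + 1 ≤ T → WA S ≤ WE T := by
    intro S T hS hST
    have hT3 : 3 ≤ T := by omega
    obtain ⟨v, hv0, hvb, hvW⟩ := hWAattained S hS
    obtain ⟨hw0, hwb, hws⟩ := hext S T hS (by omega) v hv0 hvb
    have hkey : (∑ t ∈ Finset.Icc 1 (T - 1), β ^ (t - 1) * (if t ≤ S then v t else 0))
          + β ^ (T - 2) * δ1 * (if T ≤ S then v T else 0) ≤
        (∑ t ∈ Finset.Icc 1 (T - 1), β ^ (t - 1) * vE T t) + β ^ (T - 2) * δ1 * vE T T :=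
      hEmax T hT3 (fun t => if t ≤ S then v t else 0) hw0 hwb
    have hwT : (if T ≤ S then v T else 0 : ℝ) = 0 := if_neg (by omega)
    have hws' : ∑ t ∈ Finset.Icc 1 (T - 1), β ^ (t - 1) * (if t ≤ S then v t else 0)
        = ∑ t ∈ Finset.Icc 1 S, β ^ (t - 1) * v t :=
      aux_sum_ext (by omega) (fun t x => β ^ (t - 1) * x) (fun t => by simp) v
    rw [hws', hvW, hwT, mul_zero, add_zero] at hkey
    have hsplit : WE T = (∑ t ∈ Finset.Icc 1 (T - 1), β ^ (t - 1) * vE T t)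
        + β ^ (T - 1) * vE T T := aux_split (fun t => β ^ (t - 1) * vE T t) (by omega)
    have hvT0 : 0 ≤ vE T T := hEnonneg T hT3 T (Finset.mem_Icc.mpr ⟨by omega, le_rfl⟩)
    have hpow : β ^ (T - 2) * δ1 * vE T T ≤ β ^ (T - 1) * vE T T := by
      have h1 : β ^ (T - 1) = β ^ (T - 2) * β := by
        rw [← pow_succ]
        congr 1
        omega
      rw [h1]
      exact mul_le_mul_of_nonneg_right
        (mul_le_mul_of_nonneg_left hδβ.le (pow_nonneg hβpos.le _)) hvT0
    calc WA S ≤ (∑ t ∈ Finset.Icc 1 (T - 1), β ^ (t - 1) * vE T t)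
          + β ^ (T - 2) * δ1 * vE T T := hkey
      _ ≤ (∑ t ∈ Finset.Icc 1 (T - 1), β ^ (t - 1) * vE T t)
          + β ^ (T - 1) * vE T T := by linarith
      _ = WE T := hsplit.symm
  -- convergence of WA to its supremum
  have hgmono : Monotone (fun n : ℕ => WA (n + 3)) :=
    fun a b hab => hWAmono (a + 3) (b + 3) (by omega) (by omega)
  have hgbdd : BddAbove (Set.range (fun n : ℕ => WA (n + 3))) := by
    refine ⟨M, ?_⟩
    rintro x ⟨n, rfl⟩
    exact hWAbdd (n + 3) (by omega)
  have hgtend : Filter.Tendsto (fun n : ℕ => WA (n + 3)) Filter.atTop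
      (nhds (⨆ n : ℕ, WA (n + 3))) := tendsto_atTop_ciSup hgmono hgbdd
  have hWAtend : Filter.Tendsto WA Filter.atTop (nhds (⨆ n : ℕ, WA (n + 3))) :=
    (Filter.tendsto_add_atTop_iff_nat 3).mp hgtend
  have hWAtend' : Filter.Tendsto (fun T => WA (T - 1)) Filter.atTop
      (nhds (⨆ n : ℕ, WA (n + 3))) := hWAtend.comp (Filter.tendsto_sub_atTop_nat 1)
  have hdiff : Filter.Tendsto (fun T => WA T - WA (T - 1)) Filter.atTop (nhds 0) := by
    simpa using hWAtend.sub hWAtend'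
  refine ⟨part1, ?_⟩
  apply squeeze_zero' (f := fun T => WA T - WE T)
    (g := fun T => WA T - WA (T - 1)) ?_ ?_ hdiff
  · filter_upwards [Filter.eventually_ge_atTop 3] with T hT
    exact part1 T hT
  · filter_upwards [Filter.eventually_ge_atTop 4] with T hT
    have := hWEge (T - 1) T (by omega) (by omega)
    linarith
end

section
/- Lemma 2 (Structure of the solution to Problem II). A maximizer of Problem II exists, and every maximizer v satisfies: (i) v_t(L^{t−1}, δ₂) = 0 for every t ∈ {2,…,T−1}; (ii) the values (v_t(L^t))_{t=1}^T are the unique maximizer of Σ_{t=1}^{T−1} β^{t−1} u_t + β^{T−2} δ₁ u_T over nonnegative sequences (u_t)_{t=1}^T subject to Σ_{t=1}^T φ(u_t)/R^{t−1} ≤ I; and (iii) the agent's expected payoff at the maximizer equals this maximized value. -/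
/-- A policy for Problem IV with horizon `T` and `N` types, for a fixed initial type.
Paths `ω : Fin (T-2) → Fin N` record the type draws at dates `2,…,T-1` (coordinate `s`
is the draw at date `s+2`).  `v t ω` is the date-`t` utility; `adapted` says that for
`t ≤ T-1` it depends only on the draws at dates `2,…,t` (so `v 1` is constant and
`v T` depends on the draws at dates `2,…,T-1`). -/
structure PolicyIV (T N : ℕ) where
  v : ℕ → (Fin (T - 2) → Fin N) → ℝ
  adapted : ∀ t : ℕ, t ≤ T - 1 → ∀ ω ω' : Fin (T - 2) → Fin N,
    (∀ s : Fin (T - 2), (s : ℕ) + 2 ≤ t → ω s = ω' s) → v t ω = v t ω'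

/-- Splice two paths: keep the draws of `ω` at dates `≤ t` and of `ω'` at dates `> t`. -/
def splice (T N : ℕ) (t : ℕ) (ω ω' : Fin (T - 2) → Fin N) : Fin (T - 2) → Fin N :=
  fun s => if (s : ℕ) + 2 ≤ t then ω s else ω' s

/-- Expectation over paths with i.i.d. coordinate weights `r`. -/
noncomputable def Epath (T N : ℕ) (r : Fin N → ℝ) (f : (Fin (T - 2) → Fin N) → ℝ) : ℝ :=
  ∑ ω : Fin (T - 2) → Fin N, (∏ s, r (ω s)) * f ω

/-- Discounting of date-`t` utility from date 2: `Π_{s=2}^{t-1} δ̃_s`. -/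
noncomputable def discIV (T N : ℕ) (δ : Fin N → ℝ) (t : ℕ) (ω : Fin (T - 2) → Fin N) : ℝ :=
  ∏ s : Fin (T - 2), if (s : ℕ) + 2 < t then δ (ω s) else 1

/-- Discounting of date-`τ` utility from date `t+1`: `Π_{s=t+1}^{τ-1} δ̃_s`. -/
noncomputable def discCont (T N : ℕ) (δ : Fin N → ℝ) (t τ : ℕ) (ω : Fin (T - 2) → Fin N) : ℝ :=
  ∏ s : Fin (T - 2), if t + 1 ≤ (s : ℕ) + 2 ∧ (s : ℕ) + 2 < τ then δ (ω s) else 1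

/-- The discount factor realised at date `t` along the path `ω` (for `2 ≤ t ≤ T-1`). -/
noncomputable def deltaAt (T N : ℕ) (δ : Fin N → ℝ) (t : ℕ) (ω : Fin (T - 2) → Fin N) : ℝ :=
  ∏ s : Fin (T - 2), if (s : ℕ) + 2 = t then δ (ω s) else 1

/-- The agent's expected discounted continuation utility from date `t+1` onwards,
after the history and report recorded in `ω` up to date `t`, with agent beliefs `q`:
`E_A[Σ_{τ=t+1}^T (Π_{s=t+1}^{τ-1} δ̃_s) v_τ]`. -/
noncomputable def contA (T N : ℕ) (δ q : Fin N → ℝ)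
    (v : ℕ → (Fin (T - 2) → Fin N) → ℝ) (t : ℕ) (ω : Fin (T - 2) → Fin N) : ℝ :=
  Epath T N q (fun ω' => ∑ τ ∈ Finset.Icc (t + 1) T,
    discCont T N δ t τ (splice T N t ω ω') * v τ (splice T N t ω ω'))

/-- The agent's expected payoff: `v₁ + δ₁·E_A[Σ_{t=2}^T (Π_{s=2}^{t-1} δ̃_s) v_t]`. -/
noncomputable def payoffIV (T N : ℕ) (δ q : Fin N → ℝ) (δ1 : ℝ) (P : PolicyIV T N) : ℝ :=
  Epath T N q (fun ω => P.v 1 ω + δ1 * ∑ t ∈ Finset.Icc 2 T, discIV T N δ t ω * P.v t ω)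

/-- The firm's expected discounted cost: `φ(v₁) + E_F[Σ_{t=2}^T φ(v_t)/R^(t-1)]`. -/
noncomputable def costIV (T N : ℕ) (p : Fin N → ℝ) (φ : ℝ → ℝ) (R : ℝ) (P : PolicyIV T N) : ℝ :=
  Epath T N p (fun ω => φ (P.v 1 ω) + ∑ t ∈ Finset.Icc 2 T, φ (P.v t ω) / R ^ (t - 1))

/-- All incentive constraints `IC(t,H,δ,δ̂)`: at every date `t ∈ {2,…,T-1}` and after
any history (the common prefix of `ω` and `ω'`), the agent with true date-`t` type
(the date-`t` coordinate of `ω`) prefers its own report to any other report (the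
date-`t` coordinate of `ω'`). -/
def ICIV (T N : ℕ) (δ q : Fin N → ℝ) (P : PolicyIV T N) : Prop :=
  ∀ t : ℕ, 2 ≤ t → t ≤ T - 1 → ∀ ω ω' : Fin (T - 2) → Fin N,
    (∀ s : Fin (T - 2), (s : ℕ) + 2 < t → ω s = ω' s) →
    P.v t ω' + deltaAt T N δ t ω * contA T N δ q P.v t ω' ≤
      P.v t ω + deltaAt T N δ t ω * contA T N δ q P.v t ω

/-- Feasibility for Problem IV: utilities bounded below by `m = u 0`, the firm
break-even condition, and all incentive constraints. -/
def FeasIV (T N : ℕ) (δ p q : Fin N → ℝ) (φ : ℝ → ℝ) (R I m : ℝ) (P : PolicyIV T N) : Prop :=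
  (∀ t ∈ Finset.Icc 1 T, ∀ ω, m ≤ P.v t ω) ∧
  costIV T N p φ R P ≤ I ∧ ICIV T N δ q P

/-- In the two-type model of Section 3 the firm believes the agent is always
impatient, so the break-even condition only involves the all-low history
`L^t` (the path `fun _ => 0`): `Σ_{t=1}^T φ(v_t(L^t))/R^(t-1) ≤ I`. -/
noncomputable def costII (T : ℕ) (φ : ℝ → ℝ) (R : ℝ) (P : PolicyIV T 2) : ℝ :=
  ∑ t ∈ Finset.Icc 1 T, φ (P.v t (fun _ => 0)) / R ^ (t - 1)

/-- Feasibility for Problem II: nonnegative utilities, all incentive constraints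
(with types `![δ1, δ2]` and agent beliefs `![q1, q2]`), and firm break-even. -/
def FeasII (T : ℕ) (δ1 δ2 q1 q2 : ℝ) (φ : ℝ → ℝ) (R I : ℝ) (P : PolicyIV T 2) : Prop :=
  (∀ t ∈ Finset.Icc 1 T, ∀ ω, 0 ≤ P.v t ω) ∧
  ICIV T 2 ![δ1, δ2] ![q1, q2] P ∧
  costII T φ R P ≤ I

/-- Feasibility in the reduced (deterministic) problem. -/
def FeasRed (T : ℕ) (φ : ℝ → ℝ) (R I : ℝ) (u : ℕ → ℝ) : Prop :=
  (∀ t ∈ Finset.Icc 1 T, 0 ≤ u t) ∧ ∑ t ∈ Finset.Icc 1 T, φ (u t) / R ^ (t - 1) ≤ I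

/-- Objective of the reduced problem: `Σ_{t=1}^{T-1} β^(t-1) u t + β^(T-2) δ₁ u T`. -/
noncomputable def objRed (T : ℕ) (β δ1 : ℝ) (u : ℕ → ℝ) : ℝ :=
  (∑ t ∈ Finset.Icc 1 (T - 1), β ^ (t - 1) * u t) + β ^ (T - 2) * δ1 * u T

/-!
Write `C t` for the agent's continuation value after the all-low history `L^t`. Conditioning on
the draw at date `t`,
`C (t-1) = q₁ (v_t(L^t) + δ₁ C t) + q₂ (v_t(L^{t-1}, δ₂) + δ₂ C' t)`, where `C' t` is the
continuation value after `(L^{t-1}, δ₂)`, and the low type's incentive constraint after `L^{t-1}`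
bounds `δ₁ C' t` by `v_t(L^t) + δ₁ C t - v_t(L^{t-1}, δ₂)`. Unwinding this recursion bounds the
agent's payoff by the reduced objective at `(v_t(L^t))_t` minus the nonnegative rent
`Σ_t β^{t-2} q₂ (δ₂ - δ₁) v_t(L^{t-1}, δ₂)`. The reduced problem has a maximizer `u` (by
compactness: convexity of `φ` makes it grow at least linearly) which is unique (strict convexity
of `φ` and the slack created by averaging two maximizers). The bound is attained by the mechanism
that pays `u` along `L` and, after a first report of `δ₂`, pays nothing at that date and a lump sum
at the next one that leaves the low type indifferent. So every maximizer has zero rent and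
all-low utilities that solve the reduced problem.
-/

open Finset

section PathExpectation

variable {T N : ℕ} {r : Fin N → ℝ}

lemma sum_prod_weights_eq_one (hr : ∑ i, r i = 1) :
    ∑ ω : Fin (T - 2) → Fin N, ∏ s, r (ω s) = 1 := by
  rw [← Fintype.sum_pow, hr, one_pow]

lemma Epath_const_add_mul (hr : ∑ i, r i = 1) (c d : ℝ) (g : (Fin (T - 2) → Fin N) → ℝ) :
    Epath T N r (fun ω => c + d * g ω) = c + d * Epath T N r g := by
  simp only [Epath, mul_add, sum_add_distrib, ← sum_mul, sum_prod_weights_eq_one hr, one_mul,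
    mul_sum, mul_left_comm d]

lemma Epath_const (hr : ∑ i, r i = 1) (c : ℝ) : Epath T N r (fun _ => c) = c := by
  simpa using Epath_const_add_mul (T := T) hr c 0 (fun _ => 0)

lemma Epath_eq_sum_of_update_invariant (hr : ∑ i, r i = 1) (j : Fin (T - 2))
    (F : Fin N → (Fin (T - 2) → Fin N) → ℝ) (hF : ∀ i i' ω, F i (Function.update ω j i') = F i ω) :
    Epath T N r (fun ω => F (ω j) ω) = ∑ i, r i * Epath T N r (F i) := by
  set e := Equiv.funSplitAt j (Fin N)
  have hw : ∀ a ρ, ∏ s, r (e.symm (a, ρ) s) = r a * ∏ s : {s // s ≠ j}, r (ρ s) := by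
    intro a ρ
    rw [Fintype.prod_eq_mul_prod_subtype_ne _ j]
    exact congrArg₂ _ (by simp [e]) (Fintype.prod_congr _ _ fun s => by simp [e, s.2])
  have hG : ∀ i a ρ, F i (e.symm (a, ρ)) = F i (e.symm (i, ρ)) := by
    intro i a ρ
    rw [← hF i a (e.symm (i, ρ))]
    congr 1
    funext s
    by_cases hs : s = j <;> simp [e, hs]
  have hj : ∀ a ρ, e.symm (a, ρ) j = a := fun a ρ => by simp [e]
  simp only [Epath, ← e.symm.sum_comp, Fintype.sum_prod_type, hw, hj, mul_sum]
  refine Fintype.sum_congr _ _ fun i => ?_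
  simp only [hG i]
  rw [← one_mul (∑ ρ, _), ← hr, sum_mul]
  refine Fintype.sum_congr _ _ fun a => ?_
  rw [mul_sum]
  exact Fintype.sum_congr _ _ fun ρ => by ring

end PathExpectation

section Continuation

variable {T N : ℕ} {δ q : Fin N → ℝ}

lemma splice_eq_self {t : ℕ} (ht : T - 1 ≤ t) (ω ω' : Fin (T - 2) → Fin N) :
    splice T N t ω ω' = ω :=
  funext fun s => if_pos (by omega)

lemma splice_apply_of_le {t : ℕ} {s : Fin (T - 2)} (hs : (s : ℕ) + 2 ≤ t) (ω ω') :
    splice T N t ω ω' s = ω s :=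
  if_pos hs

lemma splice_pred {t : ℕ} {j : Fin (T - 2)} (hj : (j : ℕ) + 2 = t) (ω ω' : Fin (T - 2) → Fin N) :
    splice T N (t - 1) ω ω' = splice T N t (Function.update ω j (ω' j)) ω' := by
  funext s
  simp only [splice]
  by_cases hs : s = j
  · subst hs; simp [show ¬((s : ℕ) + 2 ≤ t - 1) by omega]
  · have : (s : ℕ) ≠ j := fun h => hs (Fin.ext h)
    rw [Function.update_of_ne hs]
    split_ifs <;> first | rfl | omega

lemma discCont_succ (t : ℕ) (ω : Fin (T - 2) → Fin N) : discCont T N δ t (t + 1) ω = 1 :=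
  prod_eq_one fun s _ => if_neg (by omega)

lemma discCont_pred {t τ : ℕ} {j : Fin (T - 2)} (hj : (j : ℕ) + 2 = t) (hτ : t < τ)
    (ω : Fin (T - 2) → Fin N) :
    discCont T N δ (t - 1) τ ω = δ (ω j) * discCont T N δ t τ ω := by
  rw [discCont, discCont, ← Fintype.prod_ite_eq' j (fun s => δ (ω s)), ← prod_mul_distrib]
  refine Fintype.prod_congr _ _ fun s => ?_
  by_cases hs : s = j
  · subst hs
    rw [if_pos rfl, if_pos (by omega), if_neg (by omega), mul_one]
  · have : (s : ℕ) ≠ j := fun h => hs (Fin.ext h)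
    simp only [if_neg hs, one_mul]
    congr 1
    apply propext
    omega

lemma deltaAt_eq {t : ℕ} {j : Fin (T - 2)} (hj : (j : ℕ) + 2 = t) (ω : Fin (T - 2) → Fin N) :
    deltaAt T N δ t ω = δ (ω j) := by
  rw [deltaAt, ← Fintype.prod_ite_eq' j (fun s => δ (ω s))]
  refine Fintype.prod_congr _ _ fun s => ?_
  congr 1
  exact propext ⟨fun h => Fin.ext (by omega), fun h => h ▸ hj⟩

lemma contA_congr (v : ℕ → (Fin (T - 2) → Fin N) → ℝ) {t : ℕ} {ω ω' : Fin (T - 2) → Fin N}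
    (h : ∀ s : Fin (T - 2), (s : ℕ) + 2 ≤ t → ω s = ω' s) :
    contA T N δ q v t ω = contA T N δ q v t ω' := by
  have : splice T N t ω = splice T N t ω' := by
    funext ω'' s
    simp only [splice]
    split_ifs with hs
    exacts [h s hs, rfl]
  simp only [contA, this]

lemma contA_eq_of_lumpSum (hq : ∑ i, q i = 1) (v : ℕ → (Fin (T - 2) → Fin N) → ℝ)
    {t : ℕ} (ht : t < T) {ω : Fin (T - 2) → Fin N} {c : ℝ}
    (hnext : ∀ ω', v (t + 1) (splice T N t ω ω') = c)
    (hlater : ∀ τ, t + 1 < τ → τ ≤ T → ∀ ω', v τ (splice T N t ω ω') = 0) :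
    contA T N δ q v t ω = c := by
  have : ∀ ω', ∑ τ ∈ Icc (t + 1) T,
      discCont T N δ t τ (splice T N t ω ω') * v τ (splice T N t ω ω') = c := by
    intro ω'
    rw [Icc_eq_cons_Ioc (by omega), sum_cons, discCont_succ, hnext, one_mul, add_eq_left]
    refine sum_eq_zero fun τ hτ => ?_
    rw [Finset.mem_Ioc] at hτ
    rw [hlater τ hτ.1 hτ.2, mul_zero]
  simp only [contA, this, Epath_const hq]

variable (P : PolicyIV T N)

lemma contA_last (hq : ∑ i, q i = 1) (hT : 1 ≤ T) (ω : Fin (T - 2) → Fin N) :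
    contA T N δ q P.v (T - 1) ω = P.v T ω :=
  contA_eq_of_lumpSum hq P.v (by omega)
    (fun ω' => by rw [splice_eq_self le_rfl, Nat.sub_add_cancel hT])
    (fun τ hτ hτT => by omega)

lemma contA_sub_one (hq : ∑ i, q i = 1) {t : ℕ} {j : Fin (T - 2)} (hj : (j : ℕ) + 2 = t)
    (ω : Fin (T - 2) → Fin N) :
    contA T N δ q P.v (t - 1) ω = ∑ i, q i * (P.v t (Function.update ω j i)
      + δ i * contA T N δ q P.v t (Function.update ω j i)) := by
  set F : Fin N → (Fin (T - 2) → Fin N) → ℝ := fun i ω' =>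
    P.v t (Function.update ω j i) + δ i * ∑ τ ∈ Icc (t + 1) T,
      discCont T N δ t τ (splice T N t (Function.update ω j i) ω') *
        P.v τ (splice T N t (Function.update ω j i) ω')
  have hF : ∀ i i' ω', F i (Function.update ω' j i') = F i ω' := by
    intro i i' ω'
    have : splice T N t (Function.update ω j i) (Function.update ω' j i') =
        splice T N t (Function.update ω j i) ω' := by
      funext s
      simp only [splice]
      split_ifs with hs
      · rfl
      · exact Function.update_of_ne (fun h => hs (by rw [h]; omega)) _ _
    simp only [F, this]
  have hsplit : ∀ ω', ∑ τ ∈ Icc (t - 1 + 1) T,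
      discCont T N δ (t - 1) τ (splice T N (t - 1) ω ω') * P.v τ (splice T N (t - 1) ω ω') =
      F (ω' j) ω' := by
    intro ω'
    set σ := splice T N t (Function.update ω j (ω' j)) ω'
    have hσj : σ j = ω' j := by simp [σ, splice, show (j : ℕ) + 2 ≤ t by omega]
    have hdisc : discCont T N δ (t - 1) t σ = 1 := prod_eq_one fun s _ => if_neg (by omega)
    have hvt : P.v t σ = P.v t (Function.update ω j (ω' j)) :=
      P.adapted t (by omega) _ _ fun s hs => splice_apply_of_le hs _ _
    rw [splice_pred hj, show t - 1 + 1 = t by omega, Icc_eq_cons_Ioc (by omega), sum_cons, hdisc,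
      one_mul, hvt, ← Icc_add_one_left_eq_Ioc]
    simp only [F, mul_sum]
    refine congrArg _ (sum_congr rfl fun τ hτ => ?_)
    rw [discCont_pred hj (by simp at hτ; omega), mul_assoc]
    exact congrArg (· * _) (congrArg δ hσj)
  simp only [contA, hsplit]
  rw [Epath_eq_sum_of_update_invariant hq j F hF]
  simp only [F, Epath_const_add_mul hq]

lemma payoffIV_eq (hq : ∑ i, q i = 1) (hT : 2 ≤ T) (δ1 : ℝ) (ω₀ : Fin (T - 2) → Fin N) :
    payoffIV T N δ q δ1 P = P.v 1 ω₀ + δ1 * contA T N δ q P.v 1 ω₀ := by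
  have hsplice : ∀ ω, splice T N 1 ω₀ ω = ω := fun ω => funext fun s => if_neg (by omega)
  have hdisc : ∀ t ω, discIV T N δ t ω = discCont T N δ 1 t ω := fun t ω =>
    Fintype.prod_congr _ _ fun s => by simp only [show 1 + 1 ≤ (s : ℕ) + 2 by omega, true_and]
  have hv1 : ∀ ω, P.v 1 ω = P.v 1 ω₀ :=
    fun ω => P.adapted 1 (by omega) _ _ fun s hs => by omega
  simp only [payoffIV, contA, hsplice, hdisc, hv1, Epath_const_add_mul hq]

end Continuation

noncomputable def tailSum (β : ℝ) (w : ℕ → ℝ) (c : ℝ) (m n : ℕ) : ℝ :=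
  ∑ τ ∈ Ico m n, β ^ (τ - m) * w τ + β ^ (n - m) * c

section TailSum

variable {β c : ℝ} {w : ℕ → ℝ} {m n : ℕ}

@[simp] lemma tailSum_self : tailSum β w c n n = c := by simp [tailSum]

lemma tailSum_eq_add (h : m < n) : tailSum β w c m n = w m + β * tailSum β w c (m + 1) n := by
  have hsum : ∑ τ ∈ Ico (m + 1) n, β ^ (τ - m) * w τ =
      β * ∑ τ ∈ Ico (m + 1) n, β ^ (τ - (m + 1)) * w τ := by
    rw [mul_sum]
    exact sum_congr rfl fun τ hτ => by
      rw [show τ - m = τ - (m + 1) + 1 by simp at hτ; omega, pow_succ]; ring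
  rw [tailSum, tailSum, sum_eq_sum_Ico_succ_bot h, hsum, Nat.sub_self, pow_zero, one_mul,
    show n - m = n - (m + 1) + 1 by omega, pow_succ]
  ring

lemma le_tailSum_of_le_add_mul (hβ : 0 ≤ β) (x : ℕ → ℝ) (hmn : m ≤ n)
    (h : ∀ t, m ≤ t → t < n → x t ≤ w t + β * x (t + 1)) : x m ≤ tailSum β w (x n) m n := by
  induction hmn using Nat.decreasingInduction with
  | self => simp
  | of_succ k hk ih =>
    rw [tailSum_eq_add hk]
    exact (h k le_rfl hk).trans (by gcongr; exact ih fun t ht => h t (by omega))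

lemma tailSum_nonneg (hβ : 0 ≤ β)
    (hw : ∀ τ ∈ Ico m n, 0 ≤ w τ) (hc : 0 ≤ c) : 0 ≤ tailSum β w c m n :=
  add_nonneg (sum_nonneg fun τ hτ => mul_nonneg (pow_nonneg hβ _) (hw τ hτ))
    (mul_nonneg (pow_nonneg hβ _) hc)

lemma tailSum_sub (w' : ℕ → ℝ) :
    tailSum β (fun τ => w τ - w' τ) c m n =
      tailSum β w c m n - ∑ τ ∈ Ico m n, β ^ (τ - m) * w' τ := by
  simp only [tailSum, mul_sub, sum_sub_distrib]
  ring

lemma objRed_eq_add_tailSum {T : ℕ} (hT : 2 ≤ T) (δ1 : ℝ) (u : ℕ → ℝ) :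
    objRed T β δ1 u = u 1 + tailSum β (fun τ => β * u τ) (δ1 * u T) 2 T := by
  have hIcc : Icc 1 (T - 1) = Ico 1 T := by ext; simp; omega
  rw [objRed, tailSum, hIcc, sum_eq_sum_Ico_succ_bot (by omega)]
  have : ∀ τ ∈ Ico 2 T, β ^ (τ - 1) * u τ = β ^ (τ - 2) * (β * u τ) := fun τ hτ => by
    rw [show τ - 1 = τ - 2 + 1 by simp at hτ; omega, pow_succ]; ring
  rw [sum_congr rfl this]
  simp only [Nat.sub_self, pow_zero, one_mul]
  ring

end TailSum

-- the history `(L^{t-1}, δ₂)`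
def highAt (T t : ℕ) : Fin (T - 2) → Fin 2 := fun s => if (s : ℕ) + 2 = t then 1 else 0

noncomputable def infoRent (T : ℕ) (β κ : ℝ) (P : PolicyIV T 2) : ℝ :=
  ∑ τ ∈ Ico 2 T, β ^ (τ - 2) * (κ * P.v τ (highAt T τ))

section TwoTypes

variable {T : ℕ} {δ q : Fin 2 → ℝ}

lemma contA_sub_one_low (P : PolicyIV T 2) (hq : ∑ i, q i = 1) {t : ℕ} (ht : 2 ≤ t) (htT : t < T) :
    contA T 2 δ q P.v (t - 1) (fun _ => 0) =
      q 0 * (P.v t (fun _ => 0) + δ 0 * contA T 2 δ q P.v t (fun _ => 0)) +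
      q 1 * (P.v t (highAt T t) + δ 1 * contA T 2 δ q P.v t (highAt T t)) := by
  set j : Fin (T - 2) := ⟨t - 2, by omega⟩
  have hj : (j : ℕ) + 2 = t := by simp [j]; omega
  have hlow : Function.update (fun _ => 0) j 0 = fun _ : Fin (T - 2) => (0 : Fin 2) :=
    Function.update_eq_self j _
  have hhigh : Function.update (fun _ => 0) j 1 = highAt T t := by
    funext s
    by_cases hs : s = j
    · subst hs; simp [highAt, hj]
    · have hst : (s : ℕ) + 2 ≠ t := fun h => hs (Fin.ext (by omega))
      simp [highAt, Function.update_of_ne hs, hst]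
  rw [contA_sub_one P hq hj, Fin.sum_univ_two, hlow, hhigh]

lemma ICIV.highAt_le_low {δ1 δ2 q1 q2 : ℝ} {P : PolicyIV T 2} (hIC : ICIV T 2 ![δ1, δ2] ![q1, q2] P)
    {t : ℕ} (ht : 2 ≤ t) (htT : t < T) :
    P.v t (highAt T t) + δ1 * contA T 2 ![δ1, δ2] ![q1, q2] P.v t (highAt T t) ≤
      P.v t (fun _ => 0) + δ1 * contA T 2 ![δ1, δ2] ![q1, q2] P.v t (fun _ => 0) := by
  have h := hIC t ht (by omega) (fun _ => 0) (highAt T t) fun s hs => by simp [highAt]; omega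
  rwa [deltaAt_eq (j := ⟨t - 2, by omega⟩) (by simp; omega)] at h

section InfoRent

variable {β κ : ℝ} {P : PolicyIV T 2}

lemma infoRent_nonneg (hβ : 0 ≤ β) (hκ : 0 ≤ κ) (hP : ∀ t ∈ Icc 1 T, ∀ ω, 0 ≤ P.v t ω) :
    0 ≤ infoRent T β κ P :=
  sum_nonneg fun τ hτ => by
    have := hP τ (by simp at hτ ⊢; omega) (highAt T τ)
    positivity

lemma v_highAt_eq_zero_of_infoRent_eq_zero (hβ : 0 < β) (hκ : 0 < κ)
    (hP : ∀ t ∈ Icc 1 T, ∀ ω, 0 ≤ P.v t ω) (h : infoRent T β κ P = 0) :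
    ∀ t ∈ Icc 2 (T - 1), P.v t (highAt T t) = 0 := by
  intro t ht
  have ht' : t ∈ Ico 2 T := by simp at ht ⊢; omega
  have hterm := (sum_eq_zero_iff_of_nonneg fun τ hτ => ?_).1 h t ht'
  · simpa [hβ.ne', hκ.ne'] using hterm
  · have := hP τ (by simp at hτ ⊢; omega) (highAt T τ)
    positivity

end InfoRent

theorem payoffIV_add_infoRent_le {δ1 δ2 q1 q2 β : ℝ} (hT : 2 ≤ T) (hδ1 : 0 < δ1)
    (hδ12 : δ1 ≤ δ2) (hq2 : 0 ≤ q2) (hqsum : q1 + q2 = 1) (hβ : β = q1 * δ1 + q2 * δ2)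
    {P : PolicyIV T 2} (hIC : ICIV T 2 ![δ1, δ2] ![q1, q2] P) :
    payoffIV T 2 ![δ1, δ2] ![q1, q2] δ1 P + infoRent T β (q2 * (δ2 - δ1)) P ≤
      objRed T β δ1 (fun t => P.v t (fun _ => 0)) := by
  have hq : ∑ i, ![q1, q2] i = 1 := by simp [Fin.sum_univ_two, hqsum]
  have hβ0 : 0 ≤ β := by nlinarith
  set x : ℕ → ℝ := fun t => δ1 * contA T 2 ![δ1, δ2] ![q1, q2] P.v (t - 1) (fun _ => 0)
  have hstep : ∀ t, 2 ≤ t → t < T → x t ≤ (β * P.v t (fun _ => 0) -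
      q2 * (δ2 - δ1) * P.v t (highAt T t)) + β * x (t + 1) := by
    intro t ht htT
    -- the low type's constraint after `L^(t-1)` bounds the `δ₂`-branch of the recursion
    have hIC' := hIC.highAt_le_low ht htT
    have hq2δ2 : 0 ≤ q2 * δ2 := by nlinarith
    simp only [x, contA_sub_one_low P hq ht htT, Nat.add_sub_cancel]
    simp only [Matrix.cons_val_zero, Matrix.cons_val_one]
    subst hβ
    nlinarith [mul_le_mul_of_nonneg_left hIC' hq2δ2]
  have hlast : x T = δ1 * P.v T (fun _ => 0) := by
    simp only [x]
    rw [contA_last P hq (by omega)]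
  have hx := le_tailSum_of_le_add_mul hβ0 x hT hstep
  rw [hlast, tailSum_sub] at hx
  rw [payoffIV_eq P hq hT δ1 (fun _ => 0), objRed_eq_add_tailSum hT]
  simp only [x, Nat.add_one_sub_one] at hx
  unfold infoRent
  linarith

end TwoTypes

noncomputable def redCost (T : ℕ) (φ : ℝ → ℝ) (R : ℝ) (u : ℕ → ℝ) : ℝ :=
  ∑ t ∈ Icc 1 T, φ (u t) / R ^ (t - 1)

section Reduced

variable {T : ℕ} {φ : ℝ → ℝ} {R I β δ1 : ℝ}

lemma mul_apply_one_le_of_convexOn (hφconv : ConvexOn ℝ (Set.Ici 0) φ) (hφ0 : φ 0 = 0) {x : ℝ}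
    (hx : 1 ≤ x) : x * φ 1 ≤ φ x := by
  have hx0 : 0 < x := by linarith
  have h := hφconv.2 (Set.mem_Ici.2 le_rfl) hx0.le (sub_nonneg.2 (inv_le_one_of_one_le₀ hx))
    (inv_nonneg.2 hx0.le) (by ring)
  simp only [smul_eq_mul, mul_zero, zero_add, hφ0, inv_mul_cancel₀ hx0.ne'] at h
  calc x * φ 1 ≤ x * (x⁻¹ * φ x) := by gcongr
    _ = φ x := by field_simp

lemma apply_le_of_feasRed (hR : 1 ≤ R) (hφm : MonotoneOn φ (Set.Ici 0)) (hφ0 : φ 0 = 0)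
    {u : ℕ → ℝ} (hu : FeasRed T φ R I u) {t : ℕ} (ht : t ∈ Icc 1 T) :
    φ (u t) ≤ I * R ^ (T - 1) := by
  have hnn : ∀ τ ∈ Icc 1 T, 0 ≤ φ (u τ) / R ^ (τ - 1) := fun τ hτ =>
    div_nonneg (hφ0 ▸ hφm Set.self_mem_Ici (hu.1 τ hτ) (hu.1 τ hτ)) (by positivity)
  have h1 : φ (u t) / R ^ (t - 1) ≤ I := (single_le_sum hnn ht).trans hu.2
  have hI : 0 ≤ I := (sum_nonneg hnn).trans hu.2
  rw [div_le_iff₀ (by positivity)] at h1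
  calc φ (u t) ≤ I * R ^ (t - 1) := h1
    _ ≤ I * R ^ (T - 1) := by
      gcongr
      simp only [mem_Icc] at ht
      omega

lemma exists_bound_of_feasRed (hR : 1 ≤ R) (hφm : StrictMonoOn φ (Set.Ici 0))
    (hφconv : ConvexOn ℝ (Set.Ici 0) φ) (hφ0 : φ 0 = 0) :
    ∃ B, 1 ≤ B ∧ ∀ u, FeasRed T φ R I u → ∀ t ∈ Icc 1 T, u t ≤ B := by
  have hφ1 : 0 < φ 1 := hφ0 ▸ hφm Set.self_mem_Ici (Set.mem_Ici.2 zero_le_one) zero_lt_one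
  refine ⟨max 1 (I * R ^ (T - 1) / φ 1), le_max_left _ _, fun u hu t ht => ?_⟩
  rcases le_total (u t) 1 with h | h
  · exact h.trans (le_max_left _ _)
  · refine le_max_of_le_right ((le_div_iff₀ hφ1).2 ?_)
    exact (mul_apply_one_le_of_convexOn hφconv hφ0 h).trans
      (apply_le_of_feasRed hR hφm.monotoneOn hφ0 hu ht)

lemma continuousOn_redCost (hφc : ContinuousOn φ (Set.Ici 0)) :
    ContinuousOn (redCost T φ R) {u | ∀ t ∈ Icc 1 T, 0 ≤ u t} := by
  refine continuousOn_finsetSum _ fun t ht => ContinuousOn.div_const ?_ _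
  exact hφc.comp (continuous_apply t).continuousOn fun u hu => Set.mem_Ici.2 (hu t ht)

lemma exists_isMax_objRed (hT : 1 ≤ T) (hR : 1 ≤ R) (hI : 0 ≤ I) (hφc : ContinuousOn φ (Set.Ici 0))
    (hφm : StrictMonoOn φ (Set.Ici 0)) (hφconv : ConvexOn ℝ (Set.Ici 0) φ) (hφ0 : φ 0 = 0) :
    ∃ u, FeasRed T φ R I u ∧ ∀ w, FeasRed T φ R I w → objRed T β δ1 w ≤ objRed T β δ1 u := by
  obtain ⟨B, hB, hbound⟩ := exists_bound_of_feasRed (T := T) (I := I) hR hφm hφconv hφ0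
  set K : Set (ℕ → ℝ) := Set.univ.pi fun _ => Set.Icc 0 B
  have hKnn : K ⊆ {u | ∀ t ∈ Icc 1 T, 0 ≤ u t} := fun u hu t _ => (hu t (Set.mem_univ t)).1
  set S := K ∩ redCost T φ R ⁻¹' Set.Iic I
  have hS : IsCompact S :=
    (isCompact_univ_pi fun _ => isCompact_Icc).of_isClosed_subset
      (((continuousOn_redCost hφc).mono hKnn).preimage_isClosed_of_isClosed
        (isClosed_set_pi fun _ _ => isClosed_Icc) isClosed_Iic) Set.inter_subset_left
  have h0 : (0 : ℕ → ℝ) ∈ S :=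
    ⟨fun t _ => ⟨le_rfl, zero_le_one.trans hB⟩, by simp [redCost, hφ0, hI]⟩
  obtain ⟨u, ⟨huK, hucost⟩, humax⟩ := hS.exists_isMaxOn ⟨0, h0⟩
    (by unfold objRed; fun_prop : Continuous (objRed T β δ1)).continuousOn
  refine ⟨u, ⟨hKnn huK, hucost⟩, fun w hw => ?_⟩
  set w' : ℕ → ℝ := (↑(Icc 1 T) : Set ℕ).indicator w
  have hw' : ∀ t ∈ Icc 1 T, w' t = w t := fun t ht => Set.indicator_of_mem (mem_coe.2 ht) w
  have hobj : objRed T β δ1 w' = objRed T β δ1 w := by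
    unfold objRed
    rw [sum_congr rfl fun t ht => by rw [hw' t (by simp at ht ⊢; omega)], hw' T (by simp; omega)]
  have hcost : redCost T φ R w' = redCost T φ R w := sum_congr rfl fun t ht => by rw [hw' t ht]
  have hw'S : w' ∈ S := by
    refine ⟨fun t _ => ?_, (hcost.trans_le hw.2 : _)⟩
    by_cases ht : t ∈ Icc 1 T
    · rw [hw' t ht]; exact ⟨hw.1 t ht, hbound w hw t ht⟩
    · rw [show w' t = 0 from Set.indicator_of_notMem (by rwa [mem_coe]) w]
      exact ⟨le_rfl, zero_le_one.trans hB⟩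
  exact hobj ▸ humax hw'S

lemma objRed_add_single (hT : 2 ≤ T) (u : ℕ → ℝ) (ε : ℝ) :
    objRed T β δ1 (u + Pi.single 1 ε) = objRed T β δ1 u + ε := by
  have h1 : 1 ∈ Icc 1 (T - 1) := by simp; omega
  simp [objRed, Pi.single_apply, mul_add, sum_add_distrib, h1, show T ≠ 1 by omega]
  ring

lemma exists_objRed_gt_of_redCost_lt (hT : 2 ≤ T) (hφc : ContinuousOn φ (Set.Ici 0))
    {u : ℕ → ℝ} (hu : ∀ t ∈ Icc 1 T, 0 ≤ u t) (hcost : redCost T φ R u < I) :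
    ∃ w, FeasRed T φ R I w ∧ objRed T β δ1 u < objRed T β δ1 w := by
  let w : ℝ → ℕ → ℝ := fun ε => u + Pi.single 1 ε
  have hw : ∀ ε, 0 ≤ ε → ∀ t ∈ Icc 1 T, 0 ≤ w ε t := by
    intro ε hε t ht
    simp only [w, Pi.add_apply, Pi.single_apply]
    split_ifs <;> linarith [hu t ht]
  have hcont : ContinuousWithinAt (fun ε => redCost T φ R (w ε)) (Set.Ioi 0) 0 :=
    (((continuousOn_redCost hφc).comp (continuous_const.add (continuous_single 1)).continuousOn
      hw).continuousWithinAt Set.self_mem_Ici).mono Set.Ioi_subset_Ici_self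
  obtain ⟨ε, hεI, hε⟩ := ((hcont.eventually (gt_mem_nhds (by simpa [w] using hcost))).and
    self_mem_nhdsWithin).exists
  refine ⟨w ε, ⟨hw ε (le_of_lt hε), hεI.le⟩, ?_⟩
  rw [objRed_add_single hT]
  linarith [show (0 : ℝ) < ε from hε]

lemma redCost_average_lt (hR : 0 < R) (hφconv : StrictConvexOn ℝ (Set.Ici 0) φ)
    {u u' : ℕ → ℝ} (hu : ∀ t ∈ Icc 1 T, 0 ≤ u t) (hu' : ∀ t ∈ Icc 1 T, 0 ≤ u' t)
    {t₀ : ℕ} (ht₀ : t₀ ∈ Icc 1 T) (hne : u t₀ ≠ u' t₀) :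
    redCost T φ R (fun t => 2⁻¹ * u t + 2⁻¹ * u' t) <
      2⁻¹ * redCost T φ R u + 2⁻¹ * redCost T φ R u' := by
  have hφ : ∀ t ∈ Icc 1 T, φ (2⁻¹ * u t + 2⁻¹ * u' t) ≤ 2⁻¹ * φ (u t) + 2⁻¹ * φ (u' t) :=
    fun t ht => by
      simpa using hφconv.convexOn.2 (hu t ht) (hu' t ht) (by norm_num) (by norm_num) (by norm_num)
  have hφ₀ : φ (2⁻¹ * u t₀ + 2⁻¹ * u' t₀) < 2⁻¹ * φ (u t₀) + 2⁻¹ * φ (u' t₀) := by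
    simpa using hφconv.2 (hu t₀ ht₀) (hu' t₀ ht₀) hne (by norm_num) (by norm_num) (by norm_num)
  simp only [redCost, mul_sum, ← sum_add_distrib]
  refine sum_lt_sum (fun t ht => ?_) ⟨t₀, ht₀, ?_⟩
  · rw [mul_div_assoc', mul_div_assoc', ← add_div]
    exact div_le_div_of_nonneg_right (hφ t ht) (by positivity)
  · rw [mul_div_assoc', mul_div_assoc', ← add_div]
    exact div_lt_div_of_pos_right hφ₀ (by positivity)

lemma eqOn_of_objRed_eq (hT : 2 ≤ T) (hR : 0 < R) (hφc : ContinuousOn φ (Set.Ici 0))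
    (hφconv : StrictConvexOn ℝ (Set.Ici 0) φ) {u u' : ℕ → ℝ} (hu : FeasRed T φ R I u)
    (hu' : FeasRed T φ R I u')
    (hopt : ∀ w, FeasRed T φ R I w → objRed T β δ1 w ≤ objRed T β δ1 u)
    (heq : objRed T β δ1 u' = objRed T β δ1 u) : ∀ t ∈ Icc 1 T, u' t = u t := by
  by_contra! h
  obtain ⟨t₀, ht₀, hne⟩ := h
  set m : ℕ → ℝ := fun t => 2⁻¹ * u t + 2⁻¹ * u' t
  have hm : ∀ t ∈ Icc 1 T, 0 ≤ m t := fun t ht => by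
    have := hu.1 t ht
    have := hu'.1 t ht
    positivity
  have hcost : redCost T φ R m < I := by
    have hcu : redCost T φ R u ≤ I := hu.2
    have hcu' : redCost T φ R u' ≤ I := hu'.2
    exact (redCost_average_lt hR hφconv hu.1 hu'.1 ht₀ hne.symm).trans_le (by linarith)
  have hobj : objRed T β δ1 m = objRed T β δ1 u := by
    have : objRed T β δ1 m = 2⁻¹ * objRed T β δ1 u + 2⁻¹ * objRed T β δ1 u' := by
      simp only [objRed, m, mul_add, sum_add_distrib, mul_left_comm _ (2⁻¹ : ℝ), ← mul_sum]
      ring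
    rw [this, heq]; ring
  obtain ⟨w, hw, hlt⟩ := exists_objRed_gt_of_redCost_lt (β := β) (δ1 := δ1) hT hφc hm hcost
  linarith [hopt w hw]

end Reduced

def lowBefore (T t : ℕ) (ω : Fin (T - 2) → Fin 2) : Prop :=
  ∀ s : Fin (T - 2), (s : ℕ) + 2 < t → ω s = 0

instance (T t : ℕ) : DecidablePred (lowBefore T t) := fun ω =>
  inferInstanceAs (Decidable (∀ s : Fin (T - 2), (s : ℕ) + 2 < t → ω s = 0))

section LowBefore

variable {T t : ℕ} {ω ω' : Fin (T - 2) → Fin 2}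

lemma lowBefore_zero : lowBefore T t (fun _ => 0) := fun _ _ => rfl

lemma lowBefore.mono {t' : ℕ} (h : lowBefore T t ω) (ht : t' ≤ t) : lowBefore T t' ω :=
  fun s hs => h s (by omega)

lemma lowBefore_congr (h : ∀ s : Fin (T - 2), (s : ℕ) + 2 < t → ω s = ω' s) :
    lowBefore T t ω ↔ lowBefore T t ω' :=
  forall_congr' fun s => imp_congr_right fun hs => by rw [h s hs]

lemma lowBefore_succ_iff {j : Fin (T - 2)} (hj : (j : ℕ) + 2 = t) :
    lowBefore T (t + 1) ω ↔ lowBefore T t ω ∧ ω j = 0 := by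
  refine ⟨fun h => ⟨h.mono (by omega), h j (by omega)⟩, fun ⟨h, hj0⟩ s hs => ?_⟩
  rcases (show (s : ℕ) + 2 < t ∨ s = j by omega) with hs | rfl
  exacts [h s hs, hj0]

lemma highAt_lowBefore : lowBefore T t (highAt T t) :=
  fun s hs => if_neg (by omega)

lemma highAt_not_lowBefore_succ (ht : 2 ≤ t) (htT : t < T) :
    ¬lowBefore T (t + 1) (highAt T t) := fun h => by
  have := h ⟨t - 2, by omega⟩ (by simp; omega)
  simp [highAt] at this
  omega

end LowBefore

/-- `δ₁` times the agent's continuation value from date `t` on along the all-low history. -/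
noncomputable def lowValue (T : ℕ) (δ1 β : ℝ) (u : ℕ → ℝ) (t : ℕ) : ℝ :=
  tailSum β (fun τ => β * u τ) (δ1 * u T) t T

/-- After a first report of `δ₂` at date `t`, the lump sum paid at `t + 1` leaves the low type
indifferent between the two reports at `t`. -/
noncomputable def lumpSumPolicy (T : ℕ) (δ1 β : ℝ) (u : ℕ → ℝ) : PolicyIV T 2 where
  v t ω :=
    if lowBefore T (t + 1) ω then u t
    else if lowBefore T t ω then 0
    else if lowBefore T (t - 1) ω then (u (t - 1) + lowValue T δ1 β u t) / δ1
    else 0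
  adapted t ht ω ω' h := by
    have hlow : ∀ k ≤ t + 1, lowBefore T k ω ↔ lowBefore T k ω' :=
      fun k hk => lowBefore_congr fun s hs => h s (by omega)
    simp only [hlow (t + 1) le_rfl, hlow t (by omega), hlow (t - 1) (by omega)]

section LumpSumPolicy

variable {T : ℕ} {δ1 δ2 q1 q2 β : ℝ} {u : ℕ → ℝ} {δ q : Fin 2 → ℝ}

lemma lumpSumPolicy_v_of_lowBefore {t : ℕ} {ω : Fin (T - 2) → Fin 2} (h : lowBefore T (t + 1) ω) :
    (lumpSumPolicy T δ1 β u).v t ω = u t :=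
  if_pos h

lemma lumpSumPolicy_v_low (t : ℕ) : (lumpSumPolicy T δ1 β u).v t (fun _ => 0) = u t :=
  lumpSumPolicy_v_of_lowBefore lowBefore_zero

lemma lumpSumPolicy_v_first_high {t : ℕ} {ω : Fin (T - 2) → Fin 2} (h : lowBefore T t ω)
    (h' : ¬lowBefore T (t + 1) ω) : (lumpSumPolicy T δ1 β u).v t ω = 0 := by
  simp [lumpSumPolicy, h, h']

lemma lumpSumPolicy_contA_of_not_lowBefore (hq : ∑ i, q i = 1) {t : ℕ} (ht : t < T)
    {ω : Fin (T - 2) → Fin 2} (h : ¬lowBefore T (t + 1) ω) :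
    contA T 2 δ q (lumpSumPolicy T δ1 β u).v t ω =
      if lowBefore T t ω then (u t + lowValue T δ1 β u (t + 1)) / δ1 else 0 := by
  have hσ : ∀ ω', ∀ k ≤ t + 1, lowBefore T k (splice T 2 t ω ω') ↔ lowBefore T k ω :=
    fun ω' k hk => lowBefore_congr fun s hs => splice_apply_of_le (by omega) _ _
  have hσ' : ∀ ω', ∀ k, t + 1 ≤ k → ¬lowBefore T k (splice T 2 t ω ω') :=
    fun ω' k hk hk' => h ((hσ ω' (t + 1) le_rfl).1 (hk'.mono hk))
  refine contA_eq_of_lumpSum hq _ ht (fun ω' => ?_) (fun τ hτ hτT ω' => ?_)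
  · simp [lumpSumPolicy, hσ' ω' (t + 2) (by omega), hσ' ω' (t + 1) le_rfl, hσ ω' t (by omega)]
  · simp [lumpSumPolicy, hσ' ω' (τ + 1) (by omega), hσ' ω' τ (by omega), hσ' ω' (τ - 1) (by omega)]

lemma lowValue_eq_add {t : ℕ} (ht : t < T) :
    lowValue T δ1 β u t = β * u t + β * lowValue T δ1 β u (t + 1) :=
  tailSum_eq_add ht

lemma lumpSumPolicy_contA_low (hδ1 : 0 < δ1) (hqsum : q1 + q2 = 1) (hβ : β = q1 * δ1 + q2 * δ2)
    {t : ℕ} (ht : 1 ≤ t) (htT : t < T) :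
    δ1 * contA T 2 ![δ1, δ2] ![q1, q2] (lumpSumPolicy T δ1 β u).v t (fun _ => 0) =
      lowValue T δ1 β u (t + 1) := by
  have hq : ∑ i, ![q1, q2] i = 1 := by simp [Fin.sum_univ_two, hqsum]
  induction htT' : T - 1 - t generalizing t with
  | zero =>
    rw [show t = T - 1 by omega, contA_last _ hq (by omega), lumpSumPolicy_v_low,
      Nat.sub_add_cancel (by omega), lowValue, tailSum_self]
  | succ k ih =>
    have hhigh := highAt_not_lowBefore_succ (T := T) (t := t + 1) (by omega) (by omega)
    have h := contA_sub_one_low (δ := ![δ1, δ2]) (lumpSumPolicy T δ1 β u) hq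
      (show 2 ≤ t + 1 by omega) (by omega)
    rw [Nat.add_sub_cancel, lumpSumPolicy_v_low, lumpSumPolicy_v_first_high highAt_lowBefore hhigh,
      lumpSumPolicy_contA_of_not_lowBefore hq (by omega) hhigh, if_pos highAt_lowBefore] at h
    rw [lowValue_eq_add (by omega), h, ← ih (t := t + 1) (by omega) (by omega) (by omega)]
    simp only [Matrix.cons_val_zero, Matrix.cons_val_one]
    field_simp
    rw [hβ]
    ring

lemma lumpSumPolicy_add_mul_contA (hq : ∑ i, q i = 1) {t : ℕ} (htT : t < T) {j : Fin (T - 2)}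
    (hj : (j : ℕ) + 2 = t) {ω : Fin (T - 2) → Fin 2} (hω : lowBefore T t ω) (d : ℝ) :
    (lumpSumPolicy T δ1 β u).v t ω + d * contA T 2 δ q (lumpSumPolicy T δ1 β u).v t ω =
      if ω j = 0 then u t + d * contA T 2 δ q (lumpSumPolicy T δ1 β u).v t (fun _ => 0)
      else d * ((u t + lowValue T δ1 β u (t + 1)) / δ1) := by
  by_cases hω0 : ω j = 0
  · have hω' : lowBefore T (t + 1) ω := (lowBefore_succ_iff hj).2 ⟨hω, hω0⟩
    rw [if_pos hω0, lumpSumPolicy_v_of_lowBefore hω', contA_congr _ fun s hs => hω' s (by omega)]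
  · have hω' : ¬lowBefore T (t + 1) ω := fun h => hω0 ((lowBefore_succ_iff hj).1 h).2
    rw [if_neg hω0, lumpSumPolicy_v_first_high hω hω',
      lumpSumPolicy_contA_of_not_lowBefore hq htT hω', if_pos hω, zero_add]

theorem lumpSumPolicy_IC (hδ1 : 0 < δ1) (hδ12 : δ1 ≤ δ2) (hqsum : q1 + q2 = 1)
    (hβ : β = q1 * δ1 + q2 * δ2) (hu : ∀ t ∈ Icc 1 T, 0 ≤ u t) :
    ICIV T 2 ![δ1, δ2] ![q1, q2] (lumpSumPolicy T δ1 β u) := by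
  intro t ht htT ω ω' hagree
  have hq : ∑ i, ![q1, q2] i = 1 := by simp [Fin.sum_univ_two, hqsum]
  set P := lumpSumPolicy T δ1 β u
  set j : Fin (T - 2) := ⟨t - 2, by omega⟩
  have hj : (j : ℕ) + 2 = t := by simp [j]; omega
  rw [deltaAt_eq hj]
  have hlow : lowBefore T t ω ↔ lowBefore T t ω' := lowBefore_congr hagree
  by_cases h : lowBefore T t ω
  · have hC := lumpSumPolicy_contA_low (T := T) (u := u) hδ1 hqsum hβ (t := t) (by omega) (by omega)
    have hut : 0 ≤ u t := hu t (by simp; omega)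
    rw [lumpSumPolicy_add_mul_contA hq (by omega) hj h,
      lumpSumPolicy_add_mul_contA hq (by omega) hj (hlow.1 h)]
    have hfin : ∀ a : Fin 2, a = 0 ∨ a = 1 := by decide
    rcases hfin (ω j) with ha | ha <;> rcases hfin (ω' j) with ha' | ha' <;>
      simp only [ha, ha', Matrix.cons_val_zero, Matrix.cons_val_one, if_true, one_ne_zero, if_false,
        le_refl]
    · rw [mul_div_cancel₀ _ hδ1.ne', hC]
    · rw [← hC, mul_div_assoc', le_div_iff₀ hδ1]
      nlinarith [mul_le_mul_of_nonneg_right hδ12 hut]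
  · have h' : ¬lowBefore T t ω' := fun h' => h (hlow.2 h')
    have hn : ¬lowBefore T (t + 1) ω := fun h'' => h (h''.mono (by omega))
    have hn' : ¬lowBefore T (t + 1) ω' := fun h'' => h' (h''.mono (by omega))
    have hv : P.v t ω' = P.v t ω := by
      simp only [P, lumpSumPolicy, h, h', hn, hn',
        lowBefore_congr (t := t - 1) fun s hs => hagree s (by omega), if_false]
    rw [hv, lumpSumPolicy_contA_of_not_lowBefore hq (by omega) hn,
      lumpSumPolicy_contA_of_not_lowBefore hq (by omega) hn', if_neg h, if_neg h']
lemma lumpSumPolicy_nonneg (hδ1 : 0 < δ1) (hβ : 0 ≤ β) (hu : ∀ t ∈ Icc 1 T, 0 ≤ u t) :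
    ∀ t ∈ Icc 1 T, ∀ ω, 0 ≤ (lumpSumPolicy T δ1 β u).v t ω := by
  intro t ht ω
  simp only [mem_Icc] at ht
  simp only [lumpSumPolicy]
  split_ifs with h₁ h₂ h₃
  · exact hu t (by simp; omega)
  · exact le_rfl
  · have ht3 : 3 ≤ t := by
      by_contra! ht3
      exact h₂ fun s hs => by omega
    have hW : 0 ≤ lowValue T δ1 β u t := tailSum_nonneg hβ
      (fun τ hτ => mul_nonneg hβ (hu τ (by simp at hτ ⊢; omega)))
      (mul_nonneg hδ1.le (hu T (by simp; omega)))
    have := hu (t - 1) (by simp; omega)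
    positivity
  · exact le_rfl

lemma payoffIV_lumpSumPolicy (hT : 2 ≤ T) (hδ1 : 0 < δ1) (hqsum : q1 + q2 = 1)
    (hβ : β = q1 * δ1 + q2 * δ2) :
    payoffIV T 2 ![δ1, δ2] ![q1, q2] δ1 (lumpSumPolicy T δ1 β u) = objRed T β δ1 u := by
  have hq : ∑ i, ![q1, q2] i = 1 := by simp [Fin.sum_univ_two, hqsum]
  rw [payoffIV_eq _ hq hT δ1 (fun _ => 0), lumpSumPolicy_v_low,
    lumpSumPolicy_contA_low hδ1 hqsum hβ le_rfl (by omega), objRed_eq_add_tailSum hT]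
  rfl

lemma feasII_lumpSumPolicy {φ : ℝ → ℝ} {R I : ℝ} (hδ1 : 0 < δ1) (hδ12 : δ1 ≤ δ2)
    (hq2 : 0 ≤ q2) (hqsum : q1 + q2 = 1) (hβ : β = q1 * δ1 + q2 * δ2) (hu : FeasRed T φ R I u) :
    FeasII T δ1 δ2 q1 q2 φ R I (lumpSumPolicy T δ1 β u) := by
  refine ⟨lumpSumPolicy_nonneg hδ1 (by nlinarith) hu.1, lumpSumPolicy_IC hδ1 hδ12 hqsum hβ hu.1, ?_⟩
  simpa only [costII, lumpSumPolicy_v_low] using hu.2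

end LumpSumPolicy

theorem stmt5_general
    (T : ℕ) (hT : 3 ≤ T)
    (R I : ℝ) (hR : 1 ≤ R) (hI : 0 < I)
    (φ : ℝ → ℝ)
    (hφc : ContinuousOn φ (Set.Ici 0))
    (hφm : StrictMonoOn φ (Set.Ici 0))
    (hφconv : StrictConvexOn ℝ (Set.Ici 0) φ)
    (hφ0 : φ 0 = 0)
    (δ1 δ2 q1 q2 β : ℝ) (hδ1 : 0 < δ1) (hδ12 : δ1 < δ2)
    (hq2 : 0 < q2) (hqsum : q1 + q2 = 1)
    (hβ : β = q1 * δ1 + q2 * δ2) :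
    -- a maximizer of Problem II exists
    (∃ P : PolicyIV T 2, FeasII T δ1 δ2 q1 q2 φ R I P ∧
      ∀ Q : PolicyIV T 2, FeasII T δ1 δ2 q1 q2 φ R I Q →
        payoffIV T 2 ![δ1, δ2] ![q1, q2] δ1 Q ≤ payoffIV T 2 ![δ1, δ2] ![q1, q2] δ1 P) ∧
    -- every maximizer has the stated structure
    (∀ P : PolicyIV T 2,
      (FeasII T δ1 δ2 q1 q2 φ R I P ∧
        ∀ Q : PolicyIV T 2, FeasII T δ1 δ2 q1 q2 φ R I Q →
          payoffIV T 2 ![δ1, δ2] ![q1, q2] δ1 Q ≤ payoffIV T 2 ![δ1, δ2] ![q1, q2] δ1 P) →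
      -- (i) zero utility at the histories (L^{t-1}, δ₂)
      (∀ t ∈ Finset.Icc 2 (T - 1),
        P.v t (fun s => if (s : ℕ) + 2 = t then 1 else 0) = 0) ∧
      -- (ii) the all-low utilities maximize the reduced problem …
      FeasRed T φ R I (fun t => P.v t (fun _ => 0)) ∧
      (∀ u : ℕ → ℝ, FeasRed T φ R I u →
        objRed T β δ1 u ≤ objRed T β δ1 (fun t => P.v t (fun _ => 0))) ∧
      -- … and are its unique maximizer
      (∀ u : ℕ → ℝ, FeasRed T φ R I u →
        objRed T β δ1 u = objRed T β δ1 (fun t => P.v t (fun _ => 0)) →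
        ∀ t ∈ Finset.Icc 1 T, u t = P.v t (fun _ => 0)) ∧
      -- (iii) the agent's expected payoff equals the reduced maximized value
      payoffIV T 2 ![δ1, δ2] ![q1, q2] δ1 P =
        objRed T β δ1 (fun t => P.v t (fun _ => 0))) := by
  have hβ0 : 0 < β := by subst hβ; nlinarith
  have hκ : 0 < q2 * (δ2 - δ1) := mul_pos hq2 (by linarith)
  obtain ⟨u, hu, huopt⟩ := exists_isMax_objRed (T := T) (β := β) (δ1 := δ1) (by omega) hR hI.le
    hφc hφm hφconv.convexOn hφ0
  have hlow : ∀ Q, FeasII T δ1 δ2 q1 q2 φ R I Q → FeasRed T φ R I (fun t => Q.v t (fun _ => 0)) :=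
    fun Q hQ => ⟨fun t ht => hQ.1 t ht _, hQ.2.2⟩
  have hbound : ∀ Q, FeasII T δ1 δ2 q1 q2 φ R I Q →
      payoffIV T 2 ![δ1, δ2] ![q1, q2] δ1 Q + infoRent T β (q2 * (δ2 - δ1)) Q ≤
        objRed T β δ1 (fun t => Q.v t (fun _ => 0)) := fun Q hQ =>
    payoffIV_add_infoRent_le (by omega) hδ1 hδ12.le hq2.le hqsum hβ hQ.2.1
  have hPu := feasII_lumpSumPolicy hδ1 hδ12.le hq2.le hqsum hβ hu
  have hpay := payoffIV_lumpSumPolicy (T := T) (u := u) (by omega) hδ1 hqsum hβ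
  refine ⟨⟨_, hPu, fun Q hQ => ?_⟩, fun P ⟨hP, hPmax⟩ => ?_⟩
  · linarith [hbound Q hQ, infoRent_nonneg hβ0.le hκ.le hQ.1, huopt _ (hlow Q hQ)]
  have hPbound := hbound P hP
  have hPred := huopt _ (hlow P hP)
  have hPopt := hPmax _ hPu
  have hPrent := infoRent_nonneg hβ0.le hκ.le hP.1
  have hobj : objRed T β δ1 (fun t => P.v t (fun _ => 0)) = objRed T β δ1 u := by linarith
  have huniq : ∀ w, FeasRed T φ R I w → objRed T β δ1 w = objRed T β δ1 u →
      ∀ t ∈ Icc 1 T, w t = u t := fun w hw hw' =>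
    eqOn_of_objRed_eq (by omega) (by linarith) hφc hφconv hu hw huopt hw'
  refine ⟨v_highAt_eq_zero_of_infoRent_eq_zero hβ0 hκ hP.1 (by linarith), hlow P hP,
    fun w hw => hobj ▸ huopt w hw, fun w hw hw' t ht => ?_, by linarith⟩
  rw [huniq w hw (hw'.trans hobj) t ht, huniq _ (hlow P hP) hobj t ht]

/-- Lemma 2 (structure of the solution to Problem II).  A maximizer of
Problem II exists, and every maximizer `P` satisfies: (i) `P.v t (L^{t-1}, δ₂) = 0`
for `t ∈ {2,…,T-1}` (the path with the single high draw at date `t`); (ii) the values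
`(P.v t (L^t))` are the unique maximizer of the reduced problem; (iii) the agent's
expected payoff at `P` equals the reduced problem's maximized value. -/
theorem stmt5
    (T : ℕ) (hT : 3 ≤ T)
    (R I : ℝ) (hR : 1 ≤ R) (hI : 0 < I)
    (φ : ℝ → ℝ)
    (hφc : ContinuousOn φ (Set.Ici 0))
    (hφm : StrictMonoOn φ (Set.Ici 0))
    (hφconv : StrictConvexOn ℝ (Set.Ici 0) φ)
    (hφd : ContDiffOn ℝ 2 φ (Set.Ioi 0))
    (hφ0 : φ 0 = 0)
    (hφtend : Filter.Tendsto (deriv φ) Filter.atTop Filter.atTop)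
    (δ1 δ2 q1 q2 β : ℝ) (hδ1 : 0 < δ1) (hδ12 : δ1 < δ2)
    (hq1 : 0 < q1) (hq2 : 0 < q2) (hqsum : q1 + q2 = 1)
    (hβ : β = q1 * δ1 + q2 * δ2) :
    -- a maximizer of Problem II exists
    (∃ P : PolicyIV T 2, FeasII T δ1 δ2 q1 q2 φ R I P ∧
      ∀ Q : PolicyIV T 2, FeasII T δ1 δ2 q1 q2 φ R I Q →
        payoffIV T 2 ![δ1, δ2] ![q1, q2] δ1 Q ≤ payoffIV T 2 ![δ1, δ2] ![q1, q2] δ1 P) ∧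
    -- every maximizer has the stated structure
    (∀ P : PolicyIV T 2,
      (FeasII T δ1 δ2 q1 q2 φ R I P ∧
        ∀ Q : PolicyIV T 2, FeasII T δ1 δ2 q1 q2 φ R I Q →
          payoffIV T 2 ![δ1, δ2] ![q1, q2] δ1 Q ≤ payoffIV T 2 ![δ1, δ2] ![q1, q2] δ1 P) →
      -- (i) zero utility at the histories (L^{t-1}, δ₂)
      (∀ t ∈ Finset.Icc 2 (T - 1),
        P.v t (fun s => if (s : ℕ) + 2 = t then 1 else 0) = 0) ∧
      -- (ii) the all-low utilities maximize the reduced problem …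
      FeasRed T φ R I (fun t => P.v t (fun _ => 0)) ∧
      (∀ u : ℕ → ℝ, FeasRed T φ R I u →
        objRed T β δ1 u ≤ objRed T β δ1 (fun t => P.v t (fun _ => 0))) ∧
      -- … and are its unique maximizer
      (∀ u : ℕ → ℝ, FeasRed T φ R I u →
        objRed T β δ1 u = objRed T β δ1 (fun t => P.v t (fun _ => 0)) →
        ∀ t ∈ Finset.Icc 1 T, u t = P.v t (fun _ => 0)) ∧
      -- (iii) the agent's expected payoff equals the reduced maximized value
      payoffIV T 2 ![δ1, δ2] ![q1, q2] δ1 P =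
        objRed T β δ1 (fun t => P.v t (fun _ => 0))) :=
  stmt5_general T hT R I hR hI φ hφc hφm hφconv hφ0 δ1 δ2 q1 q2 β hδ1 hδ12 hq2 hqsum hβ
end

section
/- Lemma 3, part 2 (Local incentive compatibility implies global incentive compatibility). Suppose the adjacent incentive constraints hold. Then for all n, n' ∈ {1,…,N}: a_n + δ^(n)·B_n ≥ a_{n'} + δ^(n)·B_{n'}. -/
/-- Lemma 3, part 2 (Local incentive compatibility implies global IC).
If the adjacent incentive constraints hold, then every type `n` weakly prefers its own
allocation `(a n, B n)` to that of any other type `n'`. -/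
theorem stmt9
    (N : ℕ) (hN : 2 ≤ N)
    (δ : ℕ → ℝ)
    (hδpos : ∀ n, 1 ≤ n → n ≤ N → 0 < δ n)
    (hδmono : ∀ n m, 1 ≤ n → n < m → m ≤ N → δ n < δ m)
    (a B : ℕ → ℝ)
    (hIC : ∀ n, 1 ≤ n → n + 1 ≤ N →
      a n + δ (n + 1) * B n ≤ a (n + 1) + δ (n + 1) * B (n + 1) ∧
      a (n + 1) + δ n * B (n + 1) ≤ a n + δ n * B n) :
    ∀ n n', 1 ≤ n → n ≤ N → 1 ≤ n' → n' ≤ N →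
      a n' + δ n * B n' ≤ a n + δ n * B n := by
  have hBmono : ∀ m, 1 ≤ m → m + 1 ≤ N → B m ≤ B (m + 1) := by
    intro m h1 h2
    obtain ⟨hA, hB'⟩ := hIC m h1 h2
    nlinarith [hδmono m (m + 1) h1 (by omega) h2]
  have hδle : ∀ n m, 1 ≤ n → n ≤ m → m ≤ N → δ n ≤ δ m := by
    intro n m h1 h2 h3
    rcases eq_or_lt_of_le h2 with h | h
    · rw [h]
    · exact (hδmono n m h1 h h3).le
  intro n n' hn1 hnN hn'1 hn'N
  rcases le_or_gt n' n with hle | hlt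
  · -- upward chain
    have key : ∀ k n', 1 ≤ n' → n' + k = n → a n' + δ n * B n' ≤ a n + δ n * B n := by
      intro k
      induction k with
      | zero => intro m h1 h2; simp at h2; rw [h2]
      | succ k ih =>
        intro m h1 h2
        have hmN : m + 1 ≤ N := by omega
        have hstep : a m + δ n * B m ≤ a (m + 1) + δ n * B (m + 1) := by
          obtain ⟨hA, _⟩ := hIC m h1 hmN
          have hB := hBmono m h1 hmN
          have hd : δ (m + 1) ≤ δ n := hδle (m + 1) n (by omega) (by omega) hnN
          nlinarith
        exact hstep.trans (ih (m + 1) (by omega) (by omega))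
    exact key (n - n') n' hn'1 (by omega)
  · -- downward chain
    have key : ∀ k n', n' = n + k → n' ≤ N → a n' + δ n * B n' ≤ a n + δ n * B n := by
      intro k
      induction k with
      | zero => intro m h1 _; simp at h1; rw [h1]
      | succ k ih =>
        intro m h1 hmN
        have hm : m = (n + k) + 1 := by omega
        have h1' : 1 ≤ n + k := by omega
        have h2' : (n + k) + 1 ≤ N := by omega
        have hstep : a m + δ n * B m ≤ a (n + k) + δ n * B (n + k) := by
          obtain ⟨_, hB'⟩ := hIC (n + k) h1' h2'
          have hB := hBmono (n + k) h1' h2'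
          have hd : δ n ≤ δ (n + k) := hδle n (n + k) hn1 (by omega) (by omega)
          rw [hm]; nlinarith
        exact hstep.trans (ih (n + k) rfl (by omega))
    exact key (n' - n) n' (by omega) hn'N
end
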